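/- arXiv:2208.07494 — 3 statements merged into one kernel-verified Lean document; each statement's English description precedes it below -/
import Mathlib

section
/- Let A be a Green biset functor and G a finite group. For all a, b ∈ A(G): (1) applying the endomorphism ã = A(Ind(Δ))(a) ∈ End_{P_A}(G) = A(G×G) as a biset-functor operator to b gives A(ã)(b) = ab; (2) ã ∘ (b × ε_A) = (ab) × ε_A in Hom_{P_A}(1,G) = A(G×1), where ε_A ∈ A(1) is the identity element of A. -/
set_option autoImplicit false
set_option maxHeartbeats 400000

/-! # Bisets

An `(H,G)`-biset is modelled as a finite `(H × G)`-set, via the usual dictionary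
`(h,g) • x = h · x · g⁻¹`. -/

structure Biset (H G : Type) [Group H] [Group G] : Type 1 where
  carrier : Type
  fin : Finite carrier
  smul : H × G → carrier → carrier
  one_smul' : ∀ x, smul 1 x = x
  mul_smul' : ∀ a b x, smul (a * b) x = smul a (smul b x)

namespace Biset

variable {G H K L : Type} [Group G] [Group H] [Group K] [Group L]

/-- An isomorphism of bisets: an equivariant bijection. -/
structure Iso (X Y : Biset H G) where
  toEquiv : X.carrier ≃ Y.carrier
  equivariant : ∀ a x, toEquiv (X.smul a x) = Y.smul a (toEquiv x)

/-- The relation defining the composition `Y ∘ X = Y ×_H X`. -/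
def compRel (Y : Biset K H) (X : Biset H G) :
    Y.carrier × X.carrier → Y.carrier × X.carrier → Prop := fun p q =>
  ∃ h : H, q.1 = Y.smul (1, h) p.1 ∧ q.2 = X.smul (h, 1) p.2

/-- Composition of bisets, `Y ∘ X = (Y × X)/H`. -/
def comp (Y : Biset K H) (X : Biset H G) : Biset K G where
  carrier := Quot (compRel Y X)
  fin := by
    have := Y.fin; have := X.fin
    exact Finite.of_surjective (Quot.mk _) fun q => Quot.inductionOn q fun a => ⟨a, rfl⟩
  smul a := Quot.map (fun p => (Y.smul (a.1, 1) p.1, X.smul (1, a.2) p.2)) (by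
    rintro ⟨y, x⟩ ⟨y', x'⟩ ⟨h, h1, h2⟩
    dsimp only at h1 h2
    refine ⟨h, ?_, ?_⟩
    · dsimp only
      rw [h1, ← Y.mul_smul', ← Y.mul_smul',
        show ((a.1, (1 : H)) : K × H) * (1, h) = ((1 : K), h) * (a.1, 1) by ext <;> simp]
    · dsimp only
      rw [h2, ← X.mul_smul', ← X.mul_smul',
        show (((1 : H), a.2) : H × G) * (h, 1) = (h, (1 : G)) * (1, a.2) by ext <;> simp])
  one_smul' x := Quot.inductionOn x fun p => by
    show Quot.mk _ (Y.smul (1, 1) p.1, X.smul (1, 1) p.2) = Quot.mk _ p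
    rw [show ((1, 1) : K × H) = 1 from rfl, show ((1, 1) : H × G) = 1 from rfl,
      Y.one_smul', X.one_smul']
  mul_smul' a b x := Quot.inductionOn x fun p => by
    show Quot.mk _ (Y.smul ((a * b).1, 1) p.1, X.smul (1, (a * b).2) p.2) = _
    have h1 : (((a * b).1, (1 : H)) : K × H) = (a.1, 1) * (b.1, 1) := by ext <;> simp
    have h2 : (((1 : H), (a * b).2) : H × G) = (1, a.2) * (1, b.2) := by ext <;> simp
    rw [h1, h2, Y.mul_smul', X.mul_smul']
    rfl

/-- The biset built from two homomorphisms into a group `M`, with two-sided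
multiplication action. -/
def ofHoms {M : Type} [Group M] [Finite M] (f : H →* M) (g : G →* M) : Biset H G where
  carrier := M
  fin := inferInstance
  smul a x := f a.1 * x * (g a.2)⁻¹
  one_smul' x := by simp
  mul_smul' a b x := by simp [mul_assoc]

/-- The induction biset `Ind(φ)` along `φ : G →* H`. -/
def ind {G H : Type} [Group G] [Group H] [Finite H] (φ : G →* H) : Biset H G :=
  ofHoms (MonoidHom.id H) φ

/-- The restriction biset `Res(φ)` along `φ : G →* H`. -/
def res {G H : Type} [Group G] [Group H] [Finite H] (φ : G →* H) : Biset G H :=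
  ofHoms φ (MonoidHom.id H)

/-- `Iso(φ)` for a group isomorphism `φ`. -/
def isoB {G H : Type} [Group G] [Group H] [Finite H] (e : G ≃* H) : Biset H G :=
  ind e.toMonoidHom

/-- The identity `(G,G)`-biset (the regular biset). -/
def idB (G : Type) [Group G] [Finite G] : Biset G G := ind (MonoidHom.id G)

/-- `→G` : the group `G` as a `(G × G, 1)`-biset. -/
def arrow (G : Type) [Group G] [Finite G] : Biset (G × G) PUnit where
  carrier := G
  fin := inferInstance
  smul a x := a.1.1 * x * a.1.2⁻¹
  one_smul' x := by simp
  mul_smul' a b x := by simp [mul_assoc]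

/-- An `(H,G)`-biset regarded as an `(H × G, 1)`-biset. -/
def oneSided (X : Biset H G) : Biset (H × G) PUnit where
  carrier := X.carrier
  fin := X.fin
  smul a x := X.smul a.1 x
  one_smul' := X.one_smul'
  mul_smul' a b x := X.mul_smul' a.1 b.1 x

/-- The opposite biset `X^op` of an `(H,G)`-biset: `g·x·h = h⁻¹ x g⁻¹`. -/
def op (X : Biset H G) : Biset G H where
  carrier := X.carrier
  fin := X.fin
  smul a x := X.smul (a.2, a.1) x
  one_smul' := X.one_smul'
  mul_smul' a b x := X.mul_smul' (a.2, a.1) (b.2, b.1) x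

/-- The biset `K × ←H × G` implementing composition in associated categories,
as a `(K × G, (K × H) × (H × G))`-biset. -/
def middle (K H G : Type) [Group K] [Group H] [Group G] [Finite K] [Finite H] [Finite G] :
    Biset (K × G) ((K × H) × (H × G)) where
  carrier := K × H × G
  fin := inferInstance
  smul a x :=
    (a.1.1 * x.1 * a.2.1.1⁻¹, a.2.1.2 * x.2.1 * a.2.2.1⁻¹, a.2.2.2 * x.2.2 * a.1.2⁻¹)
  one_smul' x := by obtain ⟨x1, x2, x3⟩ := x; simp
  mul_smul' a b x := by
    obtain ⟨⟨k, g⟩, ⟨k', h₁⟩, ⟨h₂, g'⟩⟩ := a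
    obtain ⟨⟨k2, g2⟩, ⟨k2', h₁2⟩, ⟨h₂2, g'2⟩⟩ := b
    obtain ⟨x1, x2, x3⟩ := x
    simp [mul_assoc]

/-- The biset `H × ←G` implementing the action of `Hom_{P_A}(G,H)` on `A(G)`,
as an `(H, (H × G) × G)`-biset. -/
def half (H G : Type) [Group H] [Group G] [Finite H] [Finite G] :
    Biset H ((H × G) × G) where
  carrier := H × G
  fin := inferInstance
  smul a x := (a.1 * x.1 * a.2.1.1⁻¹, a.2.1.2 * x.2 * a.2.2⁻¹)
  one_smul' x := by obtain ⟨x1, x2⟩ := x; simp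
  mul_smul' a b x := by
    obtain ⟨h, ⟨h', g₁⟩, g₂⟩ := a
    obtain ⟨h2, ⟨h'2, g₁2⟩, g₂2⟩ := b
    obtain ⟨x1, x2⟩ := x
    simp [mul_assoc]

/-- The biset `H × ←G × ←G × H`, as an
`(H × H, (H × G) × ((G × G) × (G × H)))`-biset. -/
def middle4 (H G : Type) [Group H] [Group G] [Finite H] [Finite G] :
    Biset (H × H) ((H × G) × ((G × G) × (G × H))) where
  carrier := H × G × G × H
  fin := inferInstance
  smul a x :=
    (a.1.1 * x.1 * a.2.1.1⁻¹, a.2.1.2 * x.2.1 * a.2.2.1.1⁻¹,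
      a.2.2.1.2 * x.2.2.1 * a.2.2.2.1⁻¹, a.2.2.2.2 * x.2.2.2 * a.1.2⁻¹)
  one_smul' x := by obtain ⟨x1, x2, x3, x4⟩ := x; simp
  mul_smul' a b x := by
    obtain ⟨⟨p, q⟩, ⟨h₁, g₁⟩, ⟨g₂, g₃⟩, ⟨g₄, h₂⟩⟩ := a
    obtain ⟨⟨pb, qb⟩, ⟨h₁b, g₁b⟩, ⟨g₂b, g₃b⟩, ⟨g₄b, h₂b⟩⟩ := b
    obtain ⟨x1, x2, x3, x4⟩ := x
    simp [mul_assoc]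

/-- External product of bisets. -/
def bprod (X : Biset H G) (Y : Biset L K) : Biset (H × L) (G × K) where
  carrier := X.carrier × Y.carrier
  fin := by have := X.fin; have := Y.fin; exact inferInstance
  smul a p := (X.smul (a.1.1, a.2.1) p.1, Y.smul (a.1.2, a.2.2) p.2)
  one_smul' p := by
    show (X.smul 1 p.1, Y.smul 1 p.2) = p
    rw [X.one_smul', Y.one_smul']
  mul_smul' a b p := by
    show (X.smul ((a.1.1, a.2.1) * (b.1.1, b.2.1)) p.1,
          Y.smul ((a.1.2, a.2.2) * (b.1.2, b.2.2)) p.2) = _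
    rw [X.mul_smul', Y.mul_smul']

/-- Disjoint union of bisets. -/
def bsum (X Y : Biset H G) : Biset H G where
  carrier := X.carrier ⊕ Y.carrier
  fin := by have := X.fin; have := Y.fin; exact inferInstance
  smul a p := Sum.map (X.smul a) (Y.smul a) p
  one_smul' p := by cases p <;> simp [Sum.map, X.one_smul', Y.one_smul']
  mul_smul' a b p := by cases p <;> simp [Sum.map, X.mul_smul', Y.mul_smul']

end Biset

/-- The diagonal homomorphism `G →* G × G`. -/
def diagHom (G : Type) [Group G] : G →* G × G := (MonoidHom.id G).prod (MonoidHom.id G)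

/-! # Green biset functors -/

/-- A Green biset functor over `k` (with domain all finite groups): a biset functor
with compatible `k`-algebra structures on evaluations, such that restrictions are
algebra homomorphisms and the Frobenius identities hold. -/
structure GreenBF (k : Type) [CommRing k] : Type 2 where
  obj : (G : Type) → [Group G] → [Fintype G] → Type
  ring : (G : Type) → [Group G] → [Fintype G] → Ring (obj G)
  alg : (G : Type) → [Group G] → [Fintype G] → haveI := ring G; Algebra k (obj G)
  map : {G H : Type} → [Group G] → [Fintype G] → [Group H] → [Fintype H] →
    Biset H G → obj G → obj H
  map_add : ∀ {G H : Type} [Group G] [Fintype G] [Group H] [Fintype H]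
    (X : Biset H G) (a b : obj G),
    haveI := ring G; haveI := ring H
    map X (a + b) = map X a + map X b
  map_smul : ∀ {G H : Type} [Group G] [Fintype G] [Group H] [Fintype H]
    (X : Biset H G) (c : k) (a : obj G),
    haveI := ring G; haveI := ring H; haveI := alg G; haveI := alg H
    map X (c • a) = c • map X a
  map_iso : ∀ {G H : Type} [Group G] [Fintype G] [Group H] [Fintype H]
    (X Y : Biset H G), Biset.Iso X Y → ∀ a, map X a = map Y a
  map_id : ∀ {G : Type} [Group G] [Fintype G] (a : obj G), map (Biset.idB G) a = a
  map_comp : ∀ {G H K : Type} [Group G] [Fintype G] [Group H] [Fintype H]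
    [Group K] [Fintype K] (Y : Biset K H) (X : Biset H G) (a : obj G),
    map (Y.comp X) a = map Y (map X a)
  map_bsum : ∀ {G H : Type} [Group G] [Fintype G] [Group H] [Fintype H]
    (X Y : Biset H G) (a : obj G),
    haveI := ring H
    map (X.bsum Y) a = map X a + map Y a
  res_mul : ∀ {G H : Type} [Group G] [Fintype G] [Group H] [Fintype H]
    (φ : G →* H) (a b : obj H),
    haveI := ring G; haveI := ring H
    map (Biset.res φ) (a * b) = map (Biset.res φ) a * map (Biset.res φ) b
  res_one : ∀ {G H : Type} [Group G] [Fintype G] [Group H] [Fintype H] (φ : G →* H),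
    haveI := ring G; haveI := ring H
    map (Biset.res φ) (1 : obj H) = 1
  frob1 : ∀ {G H : Type} [Group G] [Fintype G] [Group H] [Fintype H]
    (φ : G →* H) (a : obj H) (b : obj G),
    haveI := ring G; haveI := ring H
    a * map (Biset.ind φ) b = map (Biset.ind φ) (map (Biset.res φ) a * b)
  frob2 : ∀ {G H : Type} [Group G] [Fintype G] [Group H] [Fintype H]
    (φ : G →* H) (a : obj H) (b : obj G),
    haveI := ring G; haveI := ring H
    map (Biset.ind φ) b * a = map (Biset.ind φ) (b * map (Biset.res φ) a)

namespace GreenBF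

variable {k : Type} [CommRing k]

/-- The identity element `ε_A ∈ A(1)`. -/
def one1 (A : GreenBF k) : A.obj PUnit := haveI := A.ring PUnit; 1

/-- The external (bilinear) product `a × b ∈ A(G × H)`. -/
def xprod (A : GreenBF k) {G H : Type} [Group G] [Fintype G] [Group H] [Fintype H]
    (a : A.obj G) (b : A.obj H) : A.obj (G × H) :=
  haveI := A.ring (G × H)
  A.map (Biset.res (MonoidHom.fst G H)) a * A.map (Biset.res (MonoidHom.snd G H)) b

/-- Composition in the associated category `P_A` :
`Hom(G,H) = A(H × G)`, `α ∘ β = A(K×←H×G)(α × β)`. -/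
def pcomp (A : GreenBF k) {G H K : Type} [Group G] [Fintype G] [Group H] [Fintype H]
    [Group K] [Fintype K] (α : A.obj (K × H)) (β : A.obj (H × G)) : A.obj (K × G) :=
  A.map (Biset.middle K H G) (A.xprod α β)

/-- The identity morphism of `G` in `P_A` : `Id_G = A(→G)(ε_A)`. -/
def catId (A : GreenBF k) (G : Type) [Group G] [Fintype G] : A.obj (G × G) :=
  A.map (Biset.arrow G) A.one1

/-- The tilde map `ã = A(Ind Δ)(a) ∈ End_{P_A}(G)`. -/
def tilde (A : GreenBF k) {G : Type} [Group G] [Fintype G] (a : A.obj G) : A.obj (G × G) :=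
  A.map (Biset.ind (diagHom G)) a

/-- The image `e_{H×G}(→x) ∈ A(H × G)` of a biset under the initial morphism from
the Burnside functor. -/
def bsElt (A : GreenBF k) {G H : Type} [Group G] [Fintype G] [Group H] [Fintype H]
    (x : Biset H G) : A.obj (H × G) :=
  A.map x.oneSided A.one1

/-- The functor of double algebras: `E_A(x)(α) = e(→x) ∘ α ∘ e(→x^op)`. -/
def EA (A : GreenBF k) {G H : Type} [Group G] [Fintype G] [Group H] [Fintype H]
    (x : Biset H G) (α : A.obj (G × G)) : A.obj (H × H) :=
  A.pcomp (A.bsElt x) (A.pcomp α (A.bsElt x.op))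

/-- The action of `Hom_{P_A}(G,H) = A(H × G)` on `A(G)` : `A(α)(b)`. -/
def actOn (A : GreenBF k) {G H : Type} [Group G] [Fintype G] [Group H] [Fintype H]
    (α : A.obj (H × G)) (b : A.obj G) : A.obj H :=
  A.map (Biset.half H G) (A.xprod α b)

/-- The generalized inflation of endomorphisms
`ω ↦ Id_G + E_A(Inf)(ω − Id_Q)` along `π : G →* Q`. -/
def dAInf (A : GreenBF k) {G Q : Type} [Group G] [Fintype G] [Group Q] [Fintype Q]
    (π : G →* Q) (ω : A.obj (Q × Q)) : A.obj (G × G) :=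
  haveI := A.ring (G × G); haveI := A.ring (Q × Q)
  A.catId G + A.EA (Biset.res π) (ω - A.catId Q)

/-- An endomorphism `α ∈ End_{P_A}(G)`... more generally a morphism in `P_A` which is
an isomorphism. -/
def IsIsoP (A : GreenBF k) {G H : Type} [Group G] [Fintype G] [Group H] [Fintype H]
    (ω : A.obj (H × G)) : Prop :=
  ∃ ω' : A.obj (G × H), A.pcomp ω ω' = A.catId H ∧ A.pcomp ω' ω = A.catId G

/-- The opposite Green biset functor `A^op`. -/
def opp (A : GreenBF k) : GreenBF k where
  obj G := (A.obj G)ᵐᵒᵖ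
  ring G := letI := A.ring G; inferInstance
  alg G := letI := A.ring G; letI := A.alg G; inferInstance
  map X a := MulOpposite.op (A.map X a.unop)
  map_add := by
    intro G H _ _ _ _ X a b
    letI := A.ring G; letI := A.ring H
    apply MulOpposite.unop_injective
    exact A.map_add X a.unop b.unop
  map_smul := by
    intro G H _ _ _ _ X c a
    letI := A.ring G; letI := A.ring H; letI := A.alg G; letI := A.alg H
    apply MulOpposite.unop_injective
    exact A.map_smul X c a.unop
  map_iso := by
    intro G H _ _ _ _ X Y e a
    exact congrArg MulOpposite.op (A.map_iso X Y e a.unop)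
  map_id := by
    intro G _ _ a
    apply MulOpposite.unop_injective
    exact A.map_id a.unop
  map_comp := by
    intro G H K _ _ _ _ _ _ Y X a
    exact congrArg MulOpposite.op (A.map_comp Y X a.unop)
  map_bsum := by
    intro G H _ _ _ _ X Y a
    letI := A.ring H
    apply MulOpposite.unop_injective
    exact A.map_bsum X Y a.unop
  res_mul := by
    intro G H _ _ _ _ φ a b
    letI := A.ring G; letI := A.ring H
    apply MulOpposite.unop_injective
    exact A.res_mul φ b.unop a.unop
  res_one := by
    intro G H _ _ _ _ φ
    letI := A.ring G; letI := A.ring H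
    apply MulOpposite.unop_injective
    exact A.res_one φ
  frob1 := by
    intro G H _ _ _ _ φ a b
    letI := A.ring G; letI := A.ring H
    apply MulOpposite.unop_injective
    exact A.frob2 φ a.unop b.unop
  frob2 := by
    intro G H _ _ _ _ φ a b
    letI := A.ring G; letI := A.ring H
    apply MulOpposite.unop_injective
    exact A.frob1 φ a.unop b.unop

end GreenBF

/-- A morphism of Green biset functors. -/
structure GreenHom {k : Type} [CommRing k] (A C : GreenBF k) : Type 1 where
  app : ∀ (G : Type) [Group G] [Fintype G], A.obj G → C.obj G
  natural : ∀ {G H : Type} [Group G] [Fintype G] [Group H] [Fintype H]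
    (X : Biset H G) (a : A.obj G), app H (A.map X a) = C.map X (app G a)
  app_add : ∀ (G : Type) [Group G] [Fintype G] (a b : A.obj G),
    haveI := A.ring G; haveI := C.ring G
    app G (a + b) = app G a + app G b
  app_smul : ∀ (G : Type) [Group G] [Fintype G] (c : k) (a : A.obj G),
    haveI := A.ring G; haveI := C.ring G; haveI := A.alg G; haveI := C.alg G
    app G (c • a) = c • app G a
  app_mul : ∀ (G : Type) [Group G] [Fintype G] (a b : A.obj G),
    haveI := A.ring G; haveI := C.ring G
    app G (a * b) = app G a * app G b
  app_one : ∀ (G : Type) [Group G] [Fintype G],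
    haveI := A.ring G; haveI := C.ring G
    app G (1 : A.obj G) = 1

/-- An anti-involution on a Green biset functor: a biset functor endomorphism with
`a★★ = a` and `(ab)★ = b★ a★`. -/
structure AntiInvol {k : Type} [CommRing k] (A : GreenBF k) : Type 1 where
  app : ∀ (G : Type) [Group G] [Fintype G], A.obj G → A.obj G
  natural : ∀ {G H : Type} [Group G] [Fintype G] [Group H] [Fintype H]
    (X : Biset H G) (a : A.obj G), app H (A.map X a) = A.map X (app G a)
  app_add : ∀ (G : Type) [Group G] [Fintype G] (a b : A.obj G),
    haveI := A.ring G
    app G (a + b) = app G a + app G b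
  app_smul : ∀ (G : Type) [Group G] [Fintype G] (c : k) (a : A.obj G),
    haveI := A.ring G; haveI := A.alg G
    app G (c • a) = c • app G a
  invol : ∀ (G : Type) [Group G] [Fintype G] (a : A.obj G), app G (app G a) = a
  anti : ∀ (G : Type) [Group G] [Fintype G] (a b : A.obj G),
    haveI := A.ring G
    app G (a * b) = app G b * app G a

namespace GreenBF

variable {k : Type} [CommRing k]

/-- The duality `_^• = T ∘ P_δ` on the associated category induced by an
anti-involution: `α^• = A(Iso τ)(α★)`. -/
def bull (A : GreenBF k) (s : AntiInvol A) {G H : Type} [Group G] [Fintype G]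
    [Group H] [Fintype H] (α : A.obj (H × G)) : A.obj (G × H) :=
  A.map (Biset.isoB (MulEquiv.prodComm : H × G ≃* G × H)) (s.app (H × G) α)

/-- An orthogonal isomorphism in `P_A` : `ω^• = ω⁻¹`. -/
def IsOrthIso (A : GreenBF k) (s : AntiInvol A) {G H : Type} [Group G] [Fintype G]
    [Group H] [Fintype H] (ω : A.obj (H × G)) : Prop :=
  A.pcomp ω (A.bull s ω) = A.catId H ∧ A.pcomp (A.bull s ω) ω = A.catId G

end GreenBF


/-! ## Auxiliary biset isomorphisms for statement 3 -/

namespace S3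

open Biset

variable {G H K M : Type} [Group G] [Group H] [Group K] [Group M]

theorem smul_smul (X : Biset H G) (a b : H × G) (x : X.carrier) :
    X.smul a (X.smul b x) = X.smul (a * b) x := (X.mul_smul' a b x).symm

/-- Symmetry of biset isomorphisms. -/
def isoSymm {X Y : Biset H G} (e : Iso X Y) : Iso Y X where
  toEquiv := e.toEquiv.symm
  equivariant := fun a y => e.toEquiv.injective (by
    rw [e.equivariant, e.toEquiv.apply_symm_apply, e.toEquiv.apply_symm_apply])

/-- Restriction of the right action of a biset along a homomorphism. -/
def rres (Y : Biset K H) (γ : G →* H) : Biset K G where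
  carrier := Y.carrier
  fin := Y.fin
  smul a y := Y.smul (a.1, γ a.2) y
  one_smul' y := by
    show Y.smul ((1 : K), γ (1 : G)) y = y
    have h : (((1 : K), γ (1 : G)) : K × H) = 1 := by ext <;> simp
    rw [h, Y.one_smul']
  mul_smul' a b y := by
    show Y.smul ((a * b).1, γ ((a * b).2)) y
        = Y.smul (a.1, γ a.2) (Y.smul (b.1, γ b.2) y)
    rw [smul_smul]
    congr 1
    ext <;> simp

/-- `Y ∘ Ind γ ≅ rres Y γ`. -/
def compIndIso [Finite H] (Y : Biset K H) (γ : G →* H) :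
    Iso (Y.comp (Biset.ind γ)) (rres Y γ) where
  toEquiv :=
  { toFun := Quot.lift (fun p => Y.smul (1, ((p.2 : H))⁻¹) p.1) (by
      rintro ⟨y, (z : H)⟩ ⟨y', (z' : H)⟩ ⟨n, h1, h2⟩
      dsimp only at h1 h2 ⊢
      subst h1; subst h2
      show Y.smul (1, z⁻¹) y
          = Y.smul (1, ((MonoidHom.id H) n * z * (γ 1)⁻¹)⁻¹) (Y.smul (1, n) y)
      rw [smul_smul]
      congr 1
      ext <;> simp [mul_assoc])
    invFun := fun y => Quot.mk _ (y, (1 : H))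
    left_inv := by
      intro q
      refine Quot.inductionOn q ?_
      rintro ⟨y, (z : H)⟩
      refine (Quot.sound ⟨z⁻¹, rfl, ?_⟩).symm
      show (1 : H) = (MonoidHom.id H) z⁻¹ * z * (γ 1)⁻¹
      simp
    right_inv := by
      intro y
      show Y.smul (1, (1 : H)⁻¹) y = y
      have h : (((1 : K), (1 : H)⁻¹) : K × H) = 1 := by ext <;> simp
      rw [h]; exact Y.one_smul' y }
  equivariant := by
    rintro ⟨kk, g⟩ x
    refine Quot.inductionOn x ?_
    rintro ⟨y, (z : H)⟩
    show Y.smul (1, ((MonoidHom.id H) 1 * z * (γ g)⁻¹)⁻¹) (Y.smul (kk, 1) y)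
        = Y.smul (kk, γ g) (Y.smul (1, z⁻¹) y)
    rw [smul_smul, smul_smul]
    congr 1
    ext <;> simp [mul_assoc]

/-- `Res f ∘ Ind g ≅ ofHoms f g`. -/
def resCompIndIso [Finite M] (f : H →* M) (g : G →* M) :
    Iso ((Biset.res f).comp (Biset.ind g)) (ofHoms f g) where
  toEquiv :=
  { toFun := Quot.lift (fun p => id (α := M) p.1 * id (α := M) p.2) (by
      rintro ⟨(y : M), (z : M)⟩ ⟨(y' : M), (z' : M)⟩ ⟨n, h1, h2⟩
      dsimp only at h1 h2 ⊢
      subst h1; subst h2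
      show y * z = (f 1 * y * ((MonoidHom.id M) n)⁻¹) * ((MonoidHom.id M) n * z * (g 1)⁻¹)
      simp [mul_assoc])
    invFun := fun m => Quot.mk _ (((m : M)), (1 : M))
    left_inv := by
      intro q
      refine Quot.inductionOn q ?_
      rintro ⟨(y : M), (z : M)⟩
      refine (Quot.sound ⟨z⁻¹, ?_, ?_⟩).symm
      · show y * z = f 1 * y * ((MonoidHom.id M) z⁻¹)⁻¹
        simp
      · show (1 : M) = (MonoidHom.id M) z⁻¹ * z * (g 1)⁻¹
        simp
    right_inv := by
      intro m
      show id (α := M) m * (1 : M) = id (α := M) m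
      simp }
  equivariant := by
    rintro ⟨h, g'⟩ x
    refine Quot.inductionOn x ?_
    rintro ⟨(y : M), (z : M)⟩
    show (f h * y * ((MonoidHom.id M) 1)⁻¹) * ((MonoidHom.id M) 1 * z * (g g')⁻¹)
        = f h * (y * z) * (g g')⁻¹
    simp [mul_assoc]

/-- `Res α ∘ Res β ≅ Res (β ∘ α)`. -/
def resCompResIso [Finite H] [Finite M] (α : K →* H) (β : H →* M) :
    Iso ((Biset.res α).comp (Biset.res β)) (Biset.res (β.comp α)) where
  toEquiv :=
  { toFun := Quot.lift (fun p => β (id (α := H) p.1) * id (α := M) p.2) (by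
      rintro ⟨(y : H), (z : M)⟩ ⟨(y' : H), (z' : M)⟩ ⟨n, h1, h2⟩
      dsimp only at h1 h2 ⊢
      subst h1; subst h2
      show β y * z
          = β (α 1 * y * ((MonoidHom.id H) n)⁻¹) * (β n * z * ((MonoidHom.id M) 1)⁻¹)
      simp [mul_assoc])
    invFun := fun z => Quot.mk _ ((1 : H), ((z : M)))
    left_inv := by
      intro q
      refine Quot.inductionOn q ?_
      rintro ⟨(y : H), (z : M)⟩
      refine (Quot.sound ⟨y, ?_, ?_⟩).symm
      · show (1 : H) = α 1 * y * ((MonoidHom.id H) y)⁻¹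
        simp
      · show β y * z = β y * z * ((MonoidHom.id M) 1)⁻¹
        simp
    right_inv := by
      intro z
      show β (1 : H) * id (α := M) z = id (α := M) z
      simp }
  equivariant := by
    rintro ⟨kq, m⟩ x
    refine Quot.inductionOn x ?_
    rintro ⟨(y : H), (z : M)⟩
    show β (α kq * y * ((MonoidHom.id H) 1)⁻¹) * (β 1 * z * ((MonoidHom.id M) m)⁻¹)
        = (β.comp α) kq * (β y * z) * ((MonoidHom.id M) m)⁻¹
    simp [mul_assoc]

/-- `Ind (φ × id) ∘ Res fst ≅ ofHoms fst φ`. -/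
def indCompResIso [Finite G] [Finite H] [Finite K] (φ : G →* H) :
    Iso ((Biset.ind (φ.prodMap (MonoidHom.id K))).comp (Biset.res (MonoidHom.fst G K)))
      (ofHoms (MonoidHom.fst H K) φ) where
  toEquiv :=
  { toFun := Quot.lift (fun p => (id (α := H × K) p.1).1 * φ (id (α := G) p.2)) (by
      rintro ⟨(y : H × K), (x : G)⟩ ⟨(y' : H × K), (x' : G)⟩ ⟨n, h1, h2⟩
      dsimp only at h1 h2 ⊢
      subst h1; subst h2
      show y.1 * φ x
          = ((MonoidHom.id (H × K)) 1 * y * ((φ.prodMap (MonoidHom.id K)) n)⁻¹).1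
            * φ ((MonoidHom.fst G K) n * x * ((MonoidHom.id G) 1)⁻¹)
      simp [mul_assoc])
    invFun := fun h => Quot.mk _ ((((h : H)), (1 : K)), (1 : G))
    left_inv := by
      intro q
      refine Quot.inductionOn q ?_
      rintro ⟨(y : H × K), (x : G)⟩
      refine (Quot.sound ⟨(x⁻¹, y.2), ?_, ?_⟩).symm
      · show ((y.1 * φ x, 1) : H × K)
            = (MonoidHom.id (H × K)) 1 * y
              * ((φ.prodMap (MonoidHom.id K)) ((x⁻¹, y.2) : G × K))⁻¹
        ext <;> simp
      · show (1 : G) = (MonoidHom.fst G K) ((x⁻¹, y.2) : G × K) * x * ((MonoidHom.id G) 1)⁻¹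
        simp
    right_inv := by
      intro h
      show id (α := H) h * φ (1 : G) = id (α := H) h
      simp }
  equivariant := by
    rintro ⟨a, g'⟩ x
    refine Quot.inductionOn x ?_
    rintro ⟨(y : H × K), (z : G)⟩
    show ((MonoidHom.id (H × K)) a * y * ((φ.prodMap (MonoidHom.id K)) 1)⁻¹).1
          * φ ((MonoidHom.fst G K) 1 * z * ((MonoidHom.id G) g')⁻¹)
        = (MonoidHom.fst H K) a * (y.1 * φ z) * (φ g')⁻¹
    simp [mul_assoc]

/-- `rres (half G G) (Δ × id) ≅ Res Δ`. -/
def halfIndIso (G : Type) [Group G] [Fintype G] :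
    Iso (rres (Biset.half G G) ((diagHom G).prodMap (MonoidHom.id G)))
      (Biset.res (diagHom G)) where
  toEquiv :=
  { toFun := fun y => ((((y : G × G)).1, ((y : G × G)).1 * ((y : G × G)).2) : G × G)
    invFun := fun w => ((((w : G × G)).1, ((w : G × G)).1⁻¹ * ((w : G × G)).2) : G × G)
    left_inv := by rintro ⟨y1, y2⟩; show ((y1, y1⁻¹ * (y1 * y2)) : G × G) = (y1, y2); simp
    right_inv := by rintro ⟨w1, w2⟩; show ((w1, w1 * (w1⁻¹ * w2)) : G × G) = (w1, w2); simp }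
  equivariant := by
    rintro ⟨kq, m⟩ ⟨(y1 : G), (y2 : G)⟩
    show ((kq * y1 * m.1⁻¹, (kq * y1 * m.1⁻¹) * (m.1 * y2 * m.2⁻¹)) : G × G)
        = (diagHom G) kq * ((y1, y1 * y2) : G × G) * ((MonoidHom.id (G × G)) m)⁻¹
    ext <;> simp [diagHom, mul_assoc]

/-- `rres (middle G G 1) (Δ × id) ≅ Res (partial diagonal)`. -/
def middleIndIso (G : Type) [Group G] [Fintype G] :
    Iso (rres (Biset.middle G G PUnit) ((diagHom G).prodMap (MonoidHom.id (G × PUnit))))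
      (Biset.res ((MonoidHom.fst G PUnit).prod (MonoidHom.id (G × PUnit)))) where
  toEquiv :=
  { toFun := fun x =>
      ((((x : G × G × PUnit)).1,
        (((x : G × G × PUnit)).1 * ((x : G × G × PUnit)).2.1, ((x : G × G × PUnit)).2.2))
        : G × G × PUnit)
    invFun := fun w =>
      ((((w : G × G × PUnit)).1,
        (((w : G × G × PUnit)).1⁻¹ * ((w : G × G × PUnit)).2.1, ((w : G × G × PUnit)).2.2))
        : G × G × PUnit)
    left_inv := by
      rintro ⟨(x1 : G), (x2 : G), (x3 : PUnit)⟩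
      show ((x1, (x1⁻¹ * (x1 * x2), x3)) : G × G × PUnit) = (x1, (x2, x3))
      simp
    right_inv := by
      rintro ⟨(w1 : G), (w2 : G), (w3 : PUnit)⟩
      show ((w1, (w1 * (w1⁻¹ * w2), w3)) : G × G × PUnit) = (w1, (w2, w3))
      simp }
  equivariant := by
    rintro ⟨a, m⟩ ⟨(x1 : G), (x2 : G), (x3 : PUnit)⟩
    show ((a.1 * x1 * m.1⁻¹,
          ((a.1 * x1 * m.1⁻¹) * (m.1 * x2 * m.2.1⁻¹), m.2.2 * x3 * a.2⁻¹)) : G × G × PUnit)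
        = ((MonoidHom.fst G PUnit).prod (MonoidHom.id (G × PUnit))) a
            * ((x1, (x1 * x2, x3)) : G × G × PUnit) * ((MonoidHom.id (G × (G × PUnit))) m)⁻¹
    ext <;> simp [mul_assoc]

section Green

variable {k : Type} [CommRing k] (A : GreenBF k)

/-- Naturality of the external product in ind maps. -/
theorem xprod_ind {G H K : Type} [Group G] [Fintype G] [Group H] [Fintype H]
    [Group K] [Fintype K] (φ : G →* H) (a : A.obj G) (b : A.obj K) :
    A.xprod (A.map (Biset.ind φ) a) b
      = A.map (Biset.ind (φ.prodMap (MonoidHom.id K))) (A.xprod a b) := by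
  letI := A.ring (H × K); letI := A.ring (G × K)
  have h1 : A.map (Biset.res (MonoidHom.fst H K)) (A.map (Biset.ind φ) a)
      = A.map (Biset.ind (φ.prodMap (MonoidHom.id K)))
          (A.map (Biset.res (MonoidHom.fst G K)) a) := by
    rw [← A.map_comp, A.map_iso _ _ (resCompIndIso (MonoidHom.fst H K) φ),
      A.map_iso _ _ (isoSymm (indCompResIso (K := K) φ)), A.map_comp]
  have h2 : A.map (Biset.res (φ.prodMap (MonoidHom.id K)))
        (A.map (Biset.res (MonoidHom.snd H K)) b)
      = A.map (Biset.res (MonoidHom.snd G K)) b := by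
    rw [← A.map_comp,
      A.map_iso _ _ (resCompResIso (φ.prodMap (MonoidHom.id K)) (MonoidHom.snd H K))]
    have h3 : (MonoidHom.snd H K).comp (φ.prodMap (MonoidHom.id K))
        = MonoidHom.snd G K := MonoidHom.ext fun x => rfl
    rw [h3]
  show A.map (Biset.res (MonoidHom.fst H K)) (A.map (Biset.ind φ) a)
      * A.map (Biset.res (MonoidHom.snd H K)) b = _
  rw [h1, A.frob2, h2]
  rfl

/-- Part (1). -/
theorem actOn_tilde {G : Type} [Group G] [Fintype G] (a b : A.obj G) :
    haveI := A.ring G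
    A.actOn (A.tilde a) b = a * b := by
  letI := A.ring G
  letI := A.ring (G × G)
  show A.map (Biset.half G G) (A.xprod (A.map (Biset.ind (diagHom G)) a) b) = a * b
  rw [xprod_ind, ← A.map_comp,
    A.map_iso _ _ (compIndIso (Biset.half G G) ((diagHom G).prodMap (MonoidHom.id G))),
    A.map_iso _ _ (halfIndIso G)]
  show A.map (Biset.res (diagHom G))
      (A.map (Biset.res (MonoidHom.fst G G)) a * A.map (Biset.res (MonoidHom.snd G G)) b)
      = a * b
  rw [A.res_mul, ← A.map_comp, ← A.map_comp,
    A.map_iso _ _ (resCompResIso (diagHom G) (MonoidHom.fst G G)),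
    A.map_iso _ _ (resCompResIso (diagHom G) (MonoidHom.snd G G))]
  have h1 : (MonoidHom.fst G G).comp (diagHom G) = MonoidHom.id G :=
    MonoidHom.ext fun x => rfl
  have h2 : (MonoidHom.snd G G).comp (diagHom G) = MonoidHom.id G :=
    MonoidHom.ext fun x => rfl
  rw [h1, h2]
  show A.map (Biset.idB G) a * A.map (Biset.idB G) b = a * b
  rw [A.map_id, A.map_id]

/-- Part (2). -/
theorem pcomp_tilde {G : Type} [Group G] [Fintype G] (a b : A.obj G) :
    haveI := A.ring G
    A.pcomp (A.tilde a) (A.xprod b A.one1) = A.xprod (a * b) A.one1 := by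
  letI := A.ring G
  letI := A.ring (G × PUnit)
  letI := A.ring (G × (G × PUnit))
  show A.map (Biset.middle G G PUnit)
      (A.xprod (A.map (Biset.ind (diagHom G)) a) (A.xprod b A.one1)) = _
  rw [xprod_ind, ← A.map_comp,
    A.map_iso _ _ (compIndIso (Biset.middle G G PUnit)
      ((diagHom G).prodMap (MonoidHom.id (G × PUnit)))),
    A.map_iso _ _ (middleIndIso G)]
  show A.map (Biset.res ((MonoidHom.fst G PUnit).prod (MonoidHom.id (G × PUnit))))
      (A.map (Biset.res (MonoidHom.fst G (G × PUnit))) a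
        * A.map (Biset.res (MonoidHom.snd G (G × PUnit))) (A.xprod b A.one1)) = _
  rw [A.res_mul, ← A.map_comp, ← A.map_comp,
    A.map_iso _ _ (resCompResIso ((MonoidHom.fst G PUnit).prod (MonoidHom.id (G × PUnit)))
      (MonoidHom.fst G (G × PUnit))),
    A.map_iso _ _ (resCompResIso ((MonoidHom.fst G PUnit).prod (MonoidHom.id (G × PUnit)))
      (MonoidHom.snd G (G × PUnit)))]
  have h1 : (MonoidHom.fst G (G × PUnit)).comp
        ((MonoidHom.fst G PUnit).prod (MonoidHom.id (G × PUnit)))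
      = MonoidHom.fst G PUnit := MonoidHom.ext fun x => rfl
  have h2 : (MonoidHom.snd G (G × PUnit)).comp
        ((MonoidHom.fst G PUnit).prod (MonoidHom.id (G × PUnit)))
      = MonoidHom.id (G × PUnit) := MonoidHom.ext fun x => rfl
  rw [h1, h2]
  have h3 : A.map (Biset.res (MonoidHom.id (G × PUnit))) (A.xprod b A.one1)
      = A.xprod b A.one1 := A.map_id _
  rw [h3]
  show A.map (Biset.res (MonoidHom.fst G PUnit)) a
      * (A.map (Biset.res (MonoidHom.fst G PUnit)) b
        * A.map (Biset.res (MonoidHom.snd G PUnit)) A.one1)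
      = A.map (Biset.res (MonoidHom.fst G PUnit)) (a * b)
        * A.map (Biset.res (MonoidHom.snd G PUnit)) A.one1
  rw [A.res_mul, mul_assoc]

end Green

end S3

/-! STATEMENT 3: For a Green biset functor `A` and `a, b ∈ A(G)` :
(1) `A(ã)(b) = ab`; (2) `ã ∘ (b × ε_A) = (ab) × ε_A` in `Hom_{P_A}(1,G) = A(G×1)`. -/
theorem statement3 (k : Type) [CommRing k] (A : GreenBF k)
    (G : Type) [Group G] [Fintype G] :
    haveI := A.ring G
    (∀ a b : A.obj G, A.actOn (A.tilde a) b = a * b)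
    ∧ (∀ a b : A.obj G,
        A.pcomp (A.tilde a) (A.xprod b A.one1) = A.xprod (a * b) A.one1) := by
  exact ⟨fun a b => S3.actOn_tilde A a b, fun a b => S3.pcomp_tilde A a b⟩
end

section
/- Let A be a Green biset functor, φ: G → H a group homomorphism. Then the tilde of A(Ind(φ))(a) equals E_A(Ind(φ))(ã), i.e. (A(Ind(φ))(a))~ = e_{H×G}(→Ind(φ)) ∘ ã ∘ e_{G×H}(→Ind(φ)^op), for every a ∈ A(G). Equivalently, Ind(Δ_H)∘Ind(φ) ≅ (H×←G×←G×H) ∘ (→Ind(φ) × Ind(Δ_G) × →Res(φ)) as (H×H, G)-bisets. -/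
set_option autoImplicit false
set_option maxHeartbeats 400000

/-- The canonical isomorphism `G ≃ 1 × (G × 1)`. -/
def eGP (G : Type) [Group G] : G ≃* PUnit × (G × PUnit) where
  toFun g := (PUnit.unit, g, PUnit.unit)
  invFun p := p.2.1
  left_inv g := rfl
  right_inv p := rfl
  map_mul' g h := rfl


/-! ## Auxiliary infrastructure -/

namespace Biset

variable {G H K L : Type} [Group G] [Group H] [Group K] [Group L]

def Iso.refl (X : Biset H G) : Iso X X := ⟨Equiv.refl _, fun _ _ => rfl⟩

def Iso.symm {X Y : Biset H G} (e : Iso X Y) : Iso Y X :=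
  ⟨e.toEquiv.symm, fun a y => e.toEquiv.injective (by
    rw [e.equivariant, Equiv.apply_symm_apply, Equiv.apply_symm_apply])⟩

def Iso.trans {X Y Z : Biset H G} (e : Iso X Y) (f : Iso Y Z) : Iso X Z :=
  ⟨e.toEquiv.trans f.toEquiv, fun a x => by
    show f.toEquiv (e.toEquiv _) = _
    rw [e.equivariant, f.equivariant]; rfl⟩

/-- Identification of a composite biset via an explicit invariant map. -/
noncomputable def compIso (Y : Biset K H) (X : Biset H G) (Z : Biset K G)
    (θ : Y.carrier → X.carrier → Z.carrier)
    (hrel : ∀ (h : H) y x, θ (Y.smul (1, h) y) (X.smul (h, 1) x) = θ y x)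
    (hequiv : ∀ (a : K × G) y x,
      θ (Y.smul (a.1, 1) y) (X.smul (1, a.2) x) = Z.smul a (θ y x))
    (hsurj : ∀ z, ∃ y x, θ y x = z)
    (hinj : ∀ y x y' x', θ y x = θ y' x' →
      ∃ h : H, y' = Y.smul (1, h) y ∧ x' = X.smul (h, 1) x) :
    Iso (Y.comp X) Z where
  toEquiv := Equiv.ofBijective
    (Quot.lift (fun p : Y.carrier × X.carrier => θ p.1 p.2) (by
      rintro ⟨y, x⟩ ⟨y', x'⟩ ⟨h, h1, h2⟩
      dsimp only at h1 h2 ⊢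
      rw [h1, h2, hrel]))
    ⟨by
      intro q q' hq
      obtain ⟨p, rfl⟩ := q.exists_rep
      obtain ⟨p', rfl⟩ := q'.exists_rep
      obtain ⟨h, h1, h2⟩ := hinj p.1 p.2 p'.1 p'.2 hq
      exact Quot.sound ⟨h, h1, h2⟩,
      by
      intro z
      obtain ⟨y, x, hx⟩ := hsurj z
      exact ⟨Quot.mk _ (y, x), hx⟩⟩
  equivariant := by
    intro a q
    refine Quot.inductionOn q fun p => ?_
    exact hequiv a p.1 p.2

/-- Left congruence for composition of bisets. -/
def compCongrLeft {Y Y' : Biset K H} (e : Iso Y Y') (X : Biset H G) :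
    Iso (Y.comp X) (Y'.comp X) where
  toEquiv :=
    { toFun := Quot.map (fun p : Y.carrier × X.carrier => (e.toEquiv p.1, p.2)) (by
        rintro ⟨y, x⟩ ⟨y', x'⟩ ⟨h, h1, h2⟩
        exact ⟨h, by dsimp only at h1 ⊢; rw [h1, e.equivariant], h2⟩)
      invFun := Quot.map (fun p : Y'.carrier × X.carrier => (e.toEquiv.symm p.1, p.2)) (by
        rintro ⟨y, x⟩ ⟨y', x'⟩ ⟨h, h1, h2⟩
        refine ⟨h, ?_, h2⟩
        dsimp only at h1 ⊢
        apply e.toEquiv.injective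
        rw [e.equivariant, Equiv.apply_symm_apply, Equiv.apply_symm_apply, h1])
      left_inv := by
        intro q
        refine Quot.inductionOn q fun p => ?_
        show Quot.mk _ (e.toEquiv.symm (e.toEquiv p.1), p.2) = _
        rw [Equiv.symm_apply_apply]
      right_inv := by
        intro q
        refine Quot.inductionOn q fun p => ?_
        show Quot.mk _ (e.toEquiv (e.toEquiv.symm p.1), p.2) = _
        rw [Equiv.apply_symm_apply] }
  equivariant := by
    intro a q
    refine Quot.inductionOn q fun p => ?_
    show Quot.mk _ (e.toEquiv (Y.smul (a.1, 1) p.1), X.smul (1, a.2) p.2) = _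
    rw [e.equivariant]
    rfl

section Generic

variable {M N P Q : Type} [Group M] [Group N] [Group P] [Group Q]

/-- `Res(p) ∘ Ind(q) ≅ ofHoms p q`. -/
noncomputable def isoResInd [Finite M] [Finite N] (p : M →* N) (q : K →* N) :
    Iso ((res p).comp (ind q)) (ofHoms p q) :=
  compIso _ _ _ (fun (y x : N) => y * x)
    (fun h (y : N) (x : N) => by simp [res, ind, ofHoms, mul_assoc])
    (fun a (y : N) (x : N) => by simp [res, ind, ofHoms, mul_assoc])
    (fun (z : N) => ⟨z, (1 : N), mul_one z⟩)
    (fun (y x y' x' : N) hxy => by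
      exact ⟨y'⁻¹ * y, by simp [res, ofHoms, mul_assoc],
        by simp [ind, ofHoms, mul_assoc, hxy]⟩)

/-- `Ind(q₂) ∘ Ind(q₁) ≅ Ind(q₂ ∘ q₁)`. -/
noncomputable def isoIndInd [Finite M] [Finite N] (q₁ : K →* N) (q₂ : N →* M) :
    Iso ((ind q₂).comp (ind q₁)) (ind (q₂.comp q₁)) :=
  compIso _ _ _ (fun (y : M) (x : N) => y * q₂ x)
    (fun h (y : M) (x : N) => by simp [ind, ofHoms, mul_assoc])
    (fun a (y : M) (x : N) => by simp [ind, ofHoms, mul_assoc])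
    (fun (z : M) => ⟨z, (1 : N), by simp; rfl⟩)
    (fun (y : M) (x : N) (y' : M) (x' : N) hxy => by
      have h : y' = y * (q₂ x * (q₂ x')⁻¹) := by rw [← mul_assoc, hxy]; simp [mul_assoc]
      exact ⟨x' * x⁻¹, by simp [ind, ofHoms, mul_assoc, ← h],
        by simp [ind, ofHoms, mul_assoc]⟩)

/-- `Res(p₁) ∘ Res(p₂) ≅ Res(p₂ ∘ p₁)`. -/
noncomputable def isoResRes [Finite N] [Finite P] (p₁ : M →* N) (p₂ : N →* P) :
    Iso ((res p₁).comp (res p₂)) (res (p₂.comp p₁)) :=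
  compIso _ _ _ (fun (y : N) (x : P) => p₂ y * x)
    (fun h (y : N) (x : P) => by simp [res, ofHoms, mul_assoc])
    (fun a (y : N) (x : P) => by simp [res, ofHoms, mul_assoc])
    (fun (z : P) => ⟨(1 : N), z, by simp; rfl⟩)
    (fun (y : N) (x : P) (y' : N) (x' : P) hxy => by
      exact ⟨y'⁻¹ * y, by simp [res, ofHoms, mul_assoc],
        by simp [res, ofHoms, mul_assoc, hxy]⟩)

end Generic

section Generic2

variable {G₀ M M' S T KK HH GG : Type} [Group G₀] [Group M] [Group M'] [Group S] [Group T]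
  [Group KK] [Group HH] [Group GG]

/-- `Ind(f × id) ∘ Res(fst) ≅ ofHoms fst f`. -/
noncomputable def isoIndResFst [Finite G₀] [Finite M] [Finite M'] (f : G₀ →* M) :
    Iso ((ind (f.prodMap (MonoidHom.id M'))).comp (res (MonoidHom.fst G₀ M')))
      (ofHoms (MonoidHom.fst M M') f) :=
  compIso _ _ _ (fun (y : M × M') (x : G₀) => y.1 * f x)
    (fun h (y : M × M') (x : G₀) => by
      simp [ind, res, ofHoms, mul_assoc])
    (fun a (y : M × M') (x : G₀) => by
      simp [ind, res, ofHoms, mul_assoc])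
    (fun (z : M) => ⟨(z, 1), (1 : G₀), by simp; rfl⟩)
    (fun (y : M × M') (x : G₀) (y' : M × M') (x' : G₀) hxy => by
      have h1 : y'.1 = y.1 * (f x * (f x')⁻¹) := by rw [← mul_assoc, hxy]; simp [mul_assoc]
      refine ⟨(x' * x⁻¹, y'.2⁻¹ * y.2), ?_, ?_⟩
      · simp [ind, ofHoms, Prod.ext_iff, mul_assoc, h1]
      · simp [res, ofHoms, mul_assoc])

/-- `Ind(id × g) ∘ Res(snd) ≅ ofHoms snd g`. -/
noncomputable def isoIndResSnd [Finite G₀] [Finite M] [Finite M'] (g : G₀ →* M') :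
    Iso ((ind ((MonoidHom.id M).prodMap g)).comp (res (MonoidHom.snd M G₀)))
      (ofHoms (MonoidHom.snd M M') g) :=
  compIso _ _ _ (fun (y : M × M') (x : G₀) => y.2 * g x)
    (fun h (y : M × M') (x : G₀) => by
      simp [ind, res, ofHoms, mul_assoc])
    (fun a (y : M × M') (x : G₀) => by
      simp [ind, res, ofHoms, mul_assoc])
    (fun (z : M') => ⟨(1, z), (1 : G₀), by simp; rfl⟩)
    (fun (y : M × M') (x : G₀) (y' : M × M') (x' : G₀) hxy => by
      have h1 : y'.2 = y.2 * (g x * (g x')⁻¹) := by rw [← mul_assoc, hxy]; simp [mul_assoc]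
      refine ⟨(y'.1⁻¹ * y.1, x' * x⁻¹), ?_, ?_⟩
      · simp [ind, ofHoms, Prod.ext_iff, mul_assoc, h1]
      · simp [res, ofHoms, mul_assoc])

/-- The biset `K × ←H × G` with right action twisted by homomorphisms. -/
def middleHom [Finite KK] [Finite HH] [Finite GG]
    (f : S →* KK × HH) (g : T →* HH × GG) : Biset (KK × GG) (S × T) where
  carrier := KK × HH × GG
  fin := inferInstance
  smul a x := (a.1.1 * x.1 * ((f a.2.1).1)⁻¹, (f a.2.1).2 * x.2.1 * ((g a.2.2).1)⁻¹,
    (g a.2.2).2 * x.2.2 * a.1.2⁻¹)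
  one_smul' x := by obtain ⟨x1, x2, x3⟩ := x; simp
  mul_smul' a b x := by
    obtain ⟨⟨k, g0⟩, s, t⟩ := a
    obtain ⟨⟨k2, g02⟩, s2, t2⟩ := b
    obtain ⟨x1, x2, x3⟩ := x
    simp [Prod.mul_def, mul_assoc]

/-- `(K×←H×G) ∘ Ind(f × g) ≅ middleHom f g`. -/
noncomputable def isoMiddleInd [Finite KK] [Finite HH] [Finite GG]
    (f : S →* KK × HH) (g : T →* HH × GG) :
    Iso ((middle KK HH GG).comp (ind (f.prodMap g))) (middleHom f g) :=
  compIso _ _ _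
    (fun (x : KK × HH × GG) (y : (KK × HH) × (HH × GG)) =>
      (x.1 * y.1.1, y.1.2⁻¹ * (x.2.1 * y.2.1), y.2.2⁻¹ * x.2.2))
    (fun m (x : KK × HH × GG) (y : (KK × HH) × (HH × GG)) => by
      simp [middle, ind, ofHoms, middleHom, Prod.ext_iff, mul_assoc])
    (fun a (x : KK × HH × GG) (y : (KK × HH) × (HH × GG)) => by
      simp [middle, ind, ofHoms, middleHom, Prod.ext_iff, mul_assoc])
    (fun (z : KK × HH × GG) => ⟨(z.1, z.2.1, z.2.2), (1 : (KK × HH) × (HH × GG)), by simp; rfl⟩)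
    (fun (x : KK × HH × GG) (y : (KK × HH) × (HH × GG))
        (x' : KK × HH × GG) (y' : (KK × HH) × (HH × GG)) hxy => by
      replace hxy := Prod.ext_iff.mp hxy
      rw [Prod.ext_iff] at hxy
      obtain ⟨e1, e2, e3⟩ := hxy
      dsimp only at e1 e2 e3
      have f1 : x'.1 = (x.1 * y.1.1) * y'.1.1⁻¹ := by rw [e1]; group
      have f2 : x'.2.1 = y'.1.2 * ((y.1.2⁻¹ * (x.2.1 * y.2.1)) * y'.2.1⁻¹) := by
        rw [e2]; group
      have f3 : x'.2.2 = y'.2.2 * (y.2.2⁻¹ * x.2.2) := by rw [e3]; group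
      refine ⟨y' * y⁻¹, ?_, ?_⟩
      · simp [middle, Prod.ext_iff, mul_assoc, f1, f2, f3]
      · simp [ind, ofHoms, mul_assoc, Prod.map, Prod.ext_iff])

end Generic2

section Specific

variable {G H : Type} [Group G] [Group H] [Finite G] [Finite H]

/-- The biset representing `ã ∘ e((Ind φ)ᵒᵖ)`. -/
def I0 (φ : G →* H) : Biset (G × H) G where
  carrier := H × G
  fin := inferInstance
  smul a w := (φ a.1.1 * w.1 * a.1.2⁻¹, a.1.1 * w.2 * a.2⁻¹)
  one_smul' w := by obtain ⟨w1, w2⟩ := w; simp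
  mul_smul' a b w := by
    obtain ⟨⟨g0, h0⟩, g1⟩ := a; obtain ⟨⟨g0', h0'⟩, g1'⟩ := b; obtain ⟨w1, w2⟩ := w
    simp [Prod.mul_def, mul_assoc]

/-- The biset representing `e(Ind φ) ∘ -`. -/
def Jb (φ : G →* H) : Biset (H × H) (G × H) where
  carrier := H × H
  fin := inferInstance
  smul a u := (a.1.1 * u.1 * (φ a.2.1)⁻¹, a.2.2 * u.2 * a.1.2⁻¹)
  one_smul' u := by obtain ⟨u1, u2⟩ := u; simp
  mul_smul' a b u := by
    obtain ⟨⟨k, g0⟩, g1, h1⟩ := a; obtain ⟨⟨k', g0'⟩, g1', h1'⟩ := b; obtain ⟨u1, u2⟩ := u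
    simp [Prod.mul_def, mul_assoc]

/-- The final biset for part 1. -/
def Fb (φ : G →* H) : Biset (H × H) G where
  carrier := H × H
  fin := inferInstance
  smul a p := (a.1.1 * p.1 * a.1.2⁻¹, a.1.1 * p.2 * (φ a.2)⁻¹)
  one_smul' p := by obtain ⟨p1, p2⟩ := p; simp
  mul_smul' a b p := by
    obtain ⟨⟨k, g0⟩, g2⟩ := a; obtain ⟨⟨k', g0'⟩, g2'⟩ := b; obtain ⟨p1, p2⟩ := p
    simp [Prod.mul_def, mul_assoc]

/-- The intermediate biset for part 2. -/
def M2 (φ : G →* H) : Biset (H × H) (PUnit × (G × PUnit)) where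
  carrier := H × H
  fin := inferInstance
  smul a p := (a.1.1 * p.1 * (φ a.2.2.1)⁻¹, φ a.2.2.1 * p.2 * a.1.2⁻¹)
  one_smul' p := by obtain ⟨p1, p2⟩ := p; simp
  mul_smul' a b p := by
    obtain ⟨⟨k, l⟩, u0, u, u1⟩ := a; obtain ⟨⟨k', l'⟩, u0', u', u1'⟩ := b; obtain ⟨p1, p2⟩ := p
    simp [Prod.mul_def, mul_assoc]

/-- `→Ind(φ) ≅ Ind(ψ) ∘ Res(triv)` where `ψ g = (φ g, g)`. -/
noncomputable def isoOneSidedInd (φ : G →* H) :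
    Iso ((ind (φ.prod (MonoidHom.id G))).comp (res (1 : G →* PUnit)))
      (ind φ).oneSided :=
  compIso _ _ _ (fun (y : H × G) (_ : PUnit) => y.1 * (φ y.2)⁻¹)
    (fun h (y : H × G) (x : PUnit) => by simp [ind, res, ofHoms, mul_assoc]; rfl)
    (fun a (y : H × G) (x : PUnit) => by simp [ind, res, ofHoms, oneSided, mul_assoc])
    (fun (z : H) => ⟨(z, 1), PUnit.unit, by simp; rfl⟩)
    (fun (y : H × G) (x : PUnit) (y' : H × G) (x' : PUnit) hxy => by
      have h1 : y'.1 = y.1 * ((φ y.2)⁻¹ * φ y'.2) := by rw [← mul_assoc, hxy]; group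
      refine ⟨y'.2⁻¹ * y.2, ?_, ?_⟩
      · simp [ind, ofHoms, Prod.ext_iff, mul_assoc, h1]
      · simp [res, ofHoms])

/-- `→(Ind φ)ᵒᵖ ≅ Ind(ψ') ∘ Res(triv)` where `ψ' g = (g, φ g)`. -/
noncomputable def isoOneSidedIndOp (φ : G →* H) :
    Iso ((ind ((MonoidHom.id G).prod φ)).comp (res (1 : G →* PUnit)))
      (ind φ).op.oneSided :=
  compIso _ _ _ (fun (y : G × H) (_ : PUnit) => y.2 * (φ y.1)⁻¹)
    (fun h (y : G × H) (x : PUnit) => by simp [ind, res, ofHoms, mul_assoc]; rfl)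
    (fun a (y : G × H) (x : PUnit) => by simp [ind, res, ofHoms, oneSided, op, mul_assoc])
    (fun (z : H) => ⟨(1, z), PUnit.unit, by simp; rfl⟩)
    (fun (y : G × H) (x : PUnit) (y' : G × H) (x' : PUnit) hxy => by
      have h1 : y'.2 = y.2 * ((φ y.1)⁻¹ * φ y'.1) := by rw [← mul_assoc, hxy]; group
      refine ⟨y'.1⁻¹ * y.1, ?_, ?_⟩
      · simp [ind, ofHoms, Prod.ext_iff, mul_assoc, h1]
      · simp [res, ofHoms])

end Specific

section Specific2

variable {G H : Type} [Group G] [Group H] [Finite G] [Finite H]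

noncomputable def iso9 (φ : G →* H) :
    Iso ((middleHom (diagHom G) ((MonoidHom.id G).prod φ)).comp (res (MonoidHom.fst G G)))
      (I0 φ) :=
  compIso _ _ _ (fun (z : G × G × H) (x : G) => (φ (z.1 * z.2.1) * z.2.2, z.1 * x))
    (fun m (z : G × G × H) (x : G) => by
      simp [middleHom, res, ofHoms, diagHom, I0, Prod.ext_iff, mul_assoc])
    (fun a (z : G × G × H) (x : G) => by
      simp [middleHom, res, ofHoms, diagHom, I0, Prod.ext_iff, mul_assoc])
    (fun (w : H × G) => ⟨(1, 1, w.1), w.2, by simp; rfl⟩)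
    (fun (z : G × G × H) (x : G) (z' : G × G × H) (x' : G) hxy => by
      replace hxy := Prod.ext_iff.mp hxy
      obtain ⟨e1, e2⟩ := hxy
      dsimp only at e1 e2
      simp only [map_mul] at e1
      have f3 : z'.2.2 = (φ z'.2.1)⁻¹ * ((φ z'.1)⁻¹ * (φ z.1 * (φ z.2.1 * z.2.2))) := by
        rw [mul_assoc, mul_assoc] at e1
        rw [e1]; group
      have f4 : x' = z'.1⁻¹ * (z.1 * x) := by rw [e2]; group
      refine ⟨(z'.1⁻¹ * z.1, z'.2.1⁻¹ * (z'.1⁻¹ * (z.1 * z.2.1))), ?_, ?_⟩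
      · simp [middleHom, diagHom, Prod.ext_iff, mul_assoc, map_mul, map_inv, f3]
      · simp [res, ofHoms, mul_assoc, f4])

noncomputable def iso10 (φ : G →* H) :
    Iso ((middleHom (φ.prod (MonoidHom.id G)) (MonoidHom.id (G × H))).comp
        (res (MonoidHom.snd G (G × H))))
      (Jb φ) :=
  compIso _ _ _ (fun (z : H × G × H) (y : G × H) => (z.1 * φ (z.2.1 * y.1), y.2⁻¹ * z.2.2))
    (fun m (z : H × G × H) (y : G × H) => by
      simp [middleHom, res, ofHoms, Jb, Prod.ext_iff, mul_assoc])
    (fun a (z : H × G × H) (y : G × H) => by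
      simp [middleHom, res, ofHoms, Jb, Prod.ext_iff, mul_assoc])
    (fun (u : H × H) => ⟨(u.1, 1, u.2), (1, 1), by simp; rfl⟩)
    (fun (z : H × G × H) (y : G × H) (z' : H × G × H) (y' : G × H) hxy => by
      replace hxy := Prod.ext_iff.mp hxy
      obtain ⟨e1, e2⟩ := hxy
      dsimp only at e1 e2
      simp only [map_mul] at e1
      have f1 : z'.1 = z.1 * (φ z.2.1 * (φ y.1 * ((φ y'.1)⁻¹ * (φ z'.2.1)⁻¹))) := by
        have h0 : z'.1 = z.1 * (φ z.2.1 * φ y.1) * (φ y'.1)⁻¹ * (φ z'.2.1)⁻¹ := by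
          rw [e1]; group
        rw [h0]; group
      have f3 : z'.2.2 = y'.2 * (y.2⁻¹ * z.2.2) := by rw [e2]; group
      refine ⟨(z'.2.1 * (y'.1 * (y.1⁻¹ * z.2.1⁻¹)), y'.1 * y.1⁻¹, y'.2 * y.2⁻¹), ?_, ?_⟩
      · simp [middleHom, Prod.ext_iff, mul_assoc, map_mul, map_inv, f1, f3]
      · simp [res, ofHoms, Prod.ext_iff, mul_assoc])

noncomputable def iso11 (φ : G →* H) :
    Iso ((Jb φ).comp (I0 φ)) (Fb φ) :=
  compIso _ _ _ (fun (u : H × H) (w : H × G) => (u.1 * (w.1 * u.2), u.1 * φ w.2))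
    (fun m (u : H × H) (w : H × G) => by
      simp [Jb, I0, Fb, Prod.ext_iff, mul_assoc])
    (fun a (u : H × H) (w : H × G) => by
      simp [Jb, I0, Fb, Prod.ext_iff, mul_assoc])
    (fun (p : H × H) => ⟨(p.2, 1), (p.2⁻¹ * p.1, 1), by simp [mul_assoc]; rfl⟩)
    (fun (u : H × H) (w : H × G) (u' : H × H) (w' : H × G) hxy => by
      replace hxy := Prod.ext_iff.mp hxy
      obtain ⟨e1, e2⟩ := hxy
      dsimp only at e1 e2
      have f1 : u'.1 = u.1 * (φ w.2 * (φ w'.2)⁻¹) := by rw [← mul_assoc, e2]; group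
      have f2 : w'.1 = φ w'.2 * ((φ w.2)⁻¹ * (w.1 * (u.2 * u'.2⁻¹))) := by
        have h0 : w'.1 = u'.1⁻¹ * (u.1 * (w.1 * u.2) * u'.2⁻¹) := by rw [e1]; group
        rw [h0, f1]; group
      refine ⟨(w'.2 * w.2⁻¹, u'.2 * u.2⁻¹), ?_, ?_⟩
      · simp [Jb, Prod.ext_iff, mul_assoc, map_mul, map_inv, f1]
      · simp [I0, Prod.ext_iff, mul_assoc, map_mul, map_inv, f2])

noncomputable def iso12 (φ : G →* H) :
    Iso (Fb φ) (ind ((diagHom H).comp φ)) where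
  toEquiv :=
    { toFun := fun p => (p.2, p.1⁻¹ * p.2)
      invFun := fun q => (q.1 * q.2⁻¹, q.1)
      left_inv := fun (p : H × H) => by simp; rfl
      right_inv := fun (q : H × H) => by simp; rfl }
  equivariant := by
    rintro ⟨⟨k, g0⟩, g2⟩ ⟨p1, p2⟩
    simp [Fb, ind, ofHoms, diagHom, Prod.ext_iff, mul_assoc]
    refine ⟨rfl, ?_⟩
    show (k * (p1 * g0⁻¹))⁻¹ * (k * (p2 * (φ g2)⁻¹)) = g0 * (p1⁻¹ * p2 * (φ g2)⁻¹)
    group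

end Specific2

section Part2

variable {G H : Type} [Group G] [Group H] [Finite G] [Finite H]

noncomputable def isoPart2a (φ : G →* H) :
    Iso ((middle4 H G).comp
        ((ind φ).oneSided.bprod ((ind (diagHom G)).bprod (res φ).oneSided)))
      (M2 φ) :=
  compIso _ _ _
    (fun (x : H × G × G × H) (y : H × ((G × G) × H)) =>
      (x.1 * (y.1 * φ (x.2.1 * y.2.1.1)), (φ (x.2.2.1⁻¹ * y.2.1.2))⁻¹ * (y.2.2 * x.2.2.2)))
    (fun m x (y : H × ((G × G) × H)) => by
      obtain ⟨⟨h1, g1⟩, ⟨g2, g3⟩, g4, h2⟩ := m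
      obtain ⟨x1, x2, x3, x4⟩ := x
      obtain ⟨a, ⟨b1, b2⟩, c⟩ := y
      simp [middle4, bprod, oneSided, op, ind, res, ofHoms, diagHom, M2,
        Prod.ext_iff, mul_assoc])
    (fun a x (y : H × ((G × G) × H)) => by
      obtain ⟨⟨k, l⟩, u0, u, u1⟩ := a
      obtain ⟨x1, x2, x3, x4⟩ := x
      obtain ⟨a', ⟨b1, b2⟩, c⟩ := y
      simp [middle4, bprod, oneSided, op, ind, res, ofHoms, diagHom, M2,
        Prod.ext_iff, mul_assoc])
    (fun (p : H × H) => ⟨(p.1, 1, 1, 1), ((1, (1, 1), p.2) : H × (G × G) × H), by simp; rfl⟩)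
    (fun (x : H × G × G × H) (y : H × ((G × G) × H))
        (x' : H × G × G × H) (y' : H × ((G × G) × H)) hxy => by
      replace hxy := Prod.ext_iff.mp hxy
      obtain ⟨e1, e2⟩ := hxy
      dsimp only at e1 e2
      simp only [map_mul, map_inv] at e1 e2
      have f1 : y'.1 = x'.1⁻¹ * (x.1 * (y.1 * (φ x.2.1 * (φ y.2.1.1 *
          ((φ y'.2.1.1)⁻¹ * (φ x'.2.1)⁻¹))))) := by
        have h0 : y'.1 = x'.1⁻¹ * (x.1 * (y.1 * (φ x.2.1 * φ y.2.1.1))) *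
            (φ y'.2.1.1)⁻¹ * (φ x'.2.1)⁻¹ := by
          rw [mul_assoc, e1]; group
        rw [h0]; group
      have f2 : y'.2.2 = (φ x'.2.2.1)⁻¹ * (φ y'.2.1.2 * ((φ y.2.1.2)⁻¹ *
          (φ x.2.2.1 * (y.2.2 * (x.2.2.2 * x'.2.2.2⁻¹))))) := by
        have h0 : y'.2.2 = (φ x'.2.2.1)⁻¹ * (φ y'.2.1.2 *
            (((φ x.2.2.1)⁻¹ * φ y.2.1.2)⁻¹ * (y.2.2 * x.2.2.2)) * x'.2.2.2⁻¹) := by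
          rw [e2]; group
        rw [h0]; group
      refine ⟨((x'.1⁻¹ * x.1, x'.2.1 * (y'.2.1.1 * (y.2.1.1⁻¹ * x.2.1⁻¹))),
        (y'.2.1.1 * y.2.1.1⁻¹, y'.2.1.2 * y.2.1.2⁻¹),
        (x'.2.2.1⁻¹ * (y'.2.1.2 * (y.2.1.2⁻¹ * x.2.2.1)), x'.2.2.2 * x.2.2.2⁻¹)), ?_, ?_⟩
      · simp [middle4, Prod.ext_iff, mul_assoc]
      · simp [bprod, oneSided, op, ind, res, ofHoms, diagHom, Prod.ext_iff,
          mul_assoc, map_mul, map_inv, f1, f2])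

noncomputable def isoPart2b (φ : G →* H) :
    Iso ((M2 φ).comp (isoB (eGP G))) (ind ((diagHom H).comp φ)) :=
  compIso _ _ _
    (fun (p : H × H) (y : PUnit × (G × PUnit)) => (p.1 * φ y.2.1, p.2⁻¹ * φ y.2.1))
    (fun m (p : H × H) (y : PUnit × (G × PUnit)) => by
      simp [M2, isoB, ind, ofHoms, eGP, Prod.ext_iff, mul_assoc])
    (fun a (p : H × H) (y : PUnit × (G × PUnit)) => by
      simp [M2, isoB, ind, ofHoms, eGP, diagHom, Prod.ext_iff, mul_assoc])
    (fun (q : H × H) => ⟨(q.1, q.2⁻¹), ((PUnit.unit, 1, PUnit.unit) : PUnit × G × PUnit), by simp; rfl⟩)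
    (fun (p : H × H) (y : PUnit × (G × PUnit)) (p' : H × H) (y' : PUnit × (G × PUnit)) hxy => by
      replace hxy := Prod.ext_iff.mp hxy
      obtain ⟨e1, e2⟩ := hxy
      dsimp only at e1 e2
      have f1 : p'.1 = p.1 * (φ y.2.1 * (φ y'.2.1)⁻¹) := by rw [← mul_assoc, e1]; group
      have f2 : p'.2 = φ y'.2.1 * ((φ y.2.1)⁻¹ * p.2) := by
        have h0 : p'.2⁻¹ = p.2⁻¹ * φ y.2.1 * (φ y'.2.1)⁻¹ := by rw [e2]; group
        rw [← inv_inv p'.2, h0]; group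
      refine ⟨(1, (y'.2.1 * y.2.1⁻¹, 1)), ?_, ?_⟩
      · simp [M2, Prod.ext_iff, mul_assoc, map_mul, map_inv, f1, f2]
      · simp [isoB, ind, ofHoms, eGP, Prod.ext_iff, mul_assoc])

end Part2

end Biset

namespace GreenBF

variable {k : Type} [CommRing k] (A : GreenBF k)

lemma mapE1 {G M M' : Type} [Group G] [Fintype G] [Group M] [Fintype M]
    [Group M'] [Fintype M'] (f : G →* M) (u : A.obj G) :
    A.map (Biset.res (MonoidHom.fst M M')) (A.map (Biset.ind f) u)
      = A.map (Biset.ind (f.prodMap (MonoidHom.id M')))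
          (A.map (Biset.res (MonoidHom.fst G M')) u) := by
  rw [← A.map_comp, ← A.map_comp]
  exact A.map_iso _ _ ((Biset.isoResInd _ _).trans (Biset.isoIndResFst f).symm) u

lemma mapE2 {G' M M' : Type} [Group G'] [Fintype G'] [Group M] [Fintype M]
    [Group M'] [Fintype M'] (g : G' →* M') (v : A.obj G') :
    A.map (Biset.res (MonoidHom.snd M M')) (A.map (Biset.ind g) v)
      = A.map (Biset.ind ((MonoidHom.id M).prodMap g))
          (A.map (Biset.res (MonoidHom.snd M G')) v) := by
  rw [← A.map_comp, ← A.map_comp]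
  exact A.map_iso _ _ ((Biset.isoResInd _ _).trans (Biset.isoIndResSnd g).symm) v

lemma xprod_ind_left {G M M' : Type} [Group G] [Fintype G] [Group M] [Fintype M]
    [Group M'] [Fintype M'] (f : G →* M) (u : A.obj G) (β : A.obj M') :
    A.xprod (A.map (Biset.ind f) u) β
      = A.map (Biset.ind (f.prodMap (MonoidHom.id M'))) (A.xprod u β) := by
  unfold xprod
  rw [A.mapE1, A.frob2]
  congr 2
  rw [← A.map_comp, A.map_iso _ _
    (Biset.isoResRes (f.prodMap (MonoidHom.id M')) (MonoidHom.snd M M')) β,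
    show (MonoidHom.snd M M').comp (f.prodMap (MonoidHom.id M')) = MonoidHom.snd G M' from
      MonoidHom.ext fun x => rfl]

lemma xprod_ind_right {G' M M' : Type} [Group G'] [Fintype G'] [Group M] [Fintype M]
    [Group M'] [Fintype M'] (g : G' →* M') (α : A.obj M) (v : A.obj G') :
    A.xprod α (A.map (Biset.ind g) v)
      = A.map (Biset.ind ((MonoidHom.id M).prodMap g)) (A.xprod α v) := by
  unfold xprod
  rw [A.mapE2, A.frob1]
  congr 2
  rw [← A.map_comp, A.map_iso _ _
    (Biset.isoResRes ((MonoidHom.id M).prodMap g) (MonoidHom.fst M M')) α,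
    show (MonoidHom.fst M M').comp ((MonoidHom.id M).prodMap g) = MonoidHom.fst M G' from
      MonoidHom.ext fun x => rfl]

lemma xprod_one_right {G : Type} [Group G] [Fintype G] (a : A.obj G) :
    A.xprod a (haveI := A.ring G; (1 : A.obj G))
      = A.map (Biset.res (MonoidHom.fst G G)) a := by
  unfold xprod
  letI := A.ring (G × G); letI := A.ring G
  rw [A.res_one, mul_one]

lemma xprod_one_left {G H' : Type} [Group G] [Fintype G] [Group H'] [Fintype H']
    (β : A.obj H') :
    A.xprod (haveI := A.ring G; (1 : A.obj G)) β
      = A.map (Biset.res (MonoidHom.snd G H')) β := by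
  unfold xprod
  letI := A.ring (G × H'); letI := A.ring G
  rw [A.res_one, one_mul]

lemma bsElt_ind {G H : Type} [Group G] [Fintype G] [Group H] [Fintype H] (φ : G →* H) :
    A.bsElt (Biset.ind φ)
      = A.map (Biset.ind (φ.prod (MonoidHom.id G))) (haveI := A.ring G; (1 : A.obj G)) := by
  unfold bsElt one1
  letI := A.ring G; letI := A.ring PUnit
  rw [show (1 : A.obj G) = A.map (Biset.res (1 : G →* PUnit)) 1 from (A.res_one _).symm,
    ← A.map_comp]
  exact (A.map_iso _ _ (Biset.isoOneSidedInd φ) _).symm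

lemma bsElt_ind_op {G H : Type} [Group G] [Fintype G] [Group H] [Fintype H] (φ : G →* H) :
    A.bsElt (Biset.ind φ).op
      = A.map (Biset.ind ((MonoidHom.id G).prod φ)) (haveI := A.ring G; (1 : A.obj G)) := by
  unfold bsElt one1
  letI := A.ring G; letI := A.ring PUnit
  rw [show (1 : A.obj G) = A.map (Biset.res (1 : G →* PUnit)) 1 from (A.res_one _).symm,
    ← A.map_comp]
  exact (A.map_iso _ _ (Biset.isoOneSidedIndOp φ) _).symm

lemma pcomp_inner {G H : Type} [Group G] [Fintype G] [Group H] [Fintype H]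
    (φ : G →* H) (a : A.obj G) :
    A.pcomp (A.tilde a) (A.bsElt (Biset.ind φ).op) = A.map (Biset.I0 φ) a := by
  rw [A.bsElt_ind_op]
  unfold pcomp tilde
  rw [A.xprod_ind_left, A.xprod_ind_right, A.xprod_one_right]
  have h1 : A.map (Biset.ind ((diagHom G).prodMap (MonoidHom.id (G × H))))
      (A.map (Biset.ind ((MonoidHom.id G).prodMap ((MonoidHom.id G).prod φ)))
        (A.map (Biset.res (MonoidHom.fst G G)) a))
      = A.map (Biset.ind ((diagHom G).prodMap ((MonoidHom.id G).prod φ)))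
        (A.map (Biset.res (MonoidHom.fst G G)) a) := by
    rw [← A.map_comp, A.map_iso _ _ (Biset.isoIndInd _ _) _,
      show ((diagHom G).prodMap (MonoidHom.id (G × H))).comp
          ((MonoidHom.id G).prodMap ((MonoidHom.id G).prod φ))
        = (diagHom G).prodMap ((MonoidHom.id G).prod φ) from MonoidHom.ext fun x => rfl]
  rw [h1, ← A.map_comp,
    A.map_iso _ _ (Biset.isoMiddleInd (diagHom G) ((MonoidHom.id G).prod φ)) _,
    ← A.map_comp, A.map_iso _ _ (Biset.iso9 φ) a]

lemma part1_elem {G H : Type} [Group G] [Fintype G] [Group H] [Fintype H]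
    (φ : G →* H) (a : A.obj G) :
    A.EA (Biset.ind φ) (A.tilde a) = A.map (Biset.ind ((diagHom H).comp φ)) a := by
  unfold EA
  rw [A.pcomp_inner, A.bsElt_ind]
  unfold pcomp
  rw [A.xprod_ind_left, A.xprod_one_left, ← A.map_comp,
    A.map_iso _ _ (Biset.isoMiddleInd (φ.prod (MonoidHom.id G)) (MonoidHom.id (G × H))) _,
    ← A.map_comp, A.map_iso _ _ (Biset.iso10 φ) _,
    ← A.map_comp, A.map_iso _ _ (Biset.iso11 φ) a,
    A.map_iso _ _ (Biset.iso12 φ) a]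

end GreenBF

/-! STATEMENT 4: For a Green biset functor `A` and `φ : G → H`,
`(A(Ind φ)(a))~ = E_A(Ind φ)(ã)` for all `a ∈ A(G)`; equivalently,
`Ind(Δ_H) ∘ Ind(φ) ≅ (H×←G×←G×H) ∘ (→Ind(φ) × Ind(Δ_G) × →Res(φ))` as
`(H×H, G)`-bisets. -/
theorem statement4 (k : Type) [CommRing k] (A : GreenBF k)
    (G H : Type) [Group G] [Fintype G] [Group H] [Fintype H] (φ : G →* H) :
    (∀ a : A.obj G, A.tilde (A.map (Biset.ind φ) a) = A.EA (Biset.ind φ) (A.tilde a))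
    ∧ Nonempty (Biset.Iso
        ((Biset.ind (diagHom H)).comp (Biset.ind φ))
        (((Biset.middle4 H G).comp
            ((Biset.ind φ).oneSided.bprod
              ((Biset.ind (diagHom G)).bprod (Biset.res φ).oneSided))).comp
          (Biset.isoB (eGP G)))) := by
  constructor
  · intro a
    have l : A.tilde (A.map (Biset.ind φ) a)
        = A.map (Biset.ind ((diagHom H).comp φ)) a := by
      unfold GreenBF.tilde
      rw [← A.map_comp]
      exact A.map_iso _ _ (Biset.isoIndInd φ (diagHom H)) a
    rw [l, A.part1_elem]
  · exact ⟨(Biset.isoIndInd φ (diagHom H)).trans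
      (((Biset.compCongrLeft (Biset.isoPart2a φ) (Biset.isoB (eGP G))).trans
        (Biset.isoPart2b φ)).symm)⟩
end

section
/- For any Green biset functor A, the associated category of the opposite Green biset functor A^op is isomorphic, as a k-linear category, to the opposite category of the associated category of A: P_{A^op} ≅ (P_A)^op. The isomorphism T is the identity on objects and is given on hom-sets by T_{G,H} = A(Iso(τ_{H,G})): A^op(H×G) → A(G×H), where τ_{H,G} swaps coordinates. -/
set_option autoImplicit false
set_option maxHeartbeats 400000

/-- The canonical functor `T : P_{A^op} → (P_A)^op`, given on hom-sets
`A^op(H×G) → A(G×H)` by `A(Iso(τ_{H,G}))`. -/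
def Topp (k : Type) [CommRing k] (A : GreenBF k) {G H : Type}
    [Group G] [Fintype G] [Group H] [Fintype H]
    (α : A.opp.obj (H × G)) : A.obj (G × H) :=
  A.map (Biset.isoB (MulEquiv.prodComm : H × G ≃* G × H)) (MulOpposite.unop α)

/-! ## Auxiliary material for statement 6 -/

namespace Biset

section Aux

variable {G H K : Type} [Group G] [Group H] [Group K]

/-- `Res(ψ) ∘ Res(φ) ≅ Res(φ ∘ ψ)`. -/
def resCompRes [Finite G] [Finite H] (ψ : K →* G) (φ : G →* H) :
    Iso ((res ψ).comp (res φ)) (res (φ.comp ψ)) where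
  toEquiv :=
  { toFun := Quot.lift (show G × H → H from fun p => φ p.1 * p.2) (by
      rintro ⟨(y : G), (z : H)⟩ ⟨y', z'⟩ ⟨h₀, hq1, hq2⟩
      subst hq1; subst hq2
      simp [res, ofHoms, mul_assoc])
    invFun := show H → _ from fun z => Quot.mk _ ((1, z) : G × H)
    left_inv := by
      intro q
      refine Quot.inductionOn q ?_
      rintro ⟨(y : G), (z : H)⟩
      exact (Quot.sound ⟨y, by simp [res, ofHoms], by simp [res, ofHoms]⟩).symm
    right_inv := by
      show ∀ z : H, φ 1 * z = z
      intro z; simp }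
  equivariant := by
    rintro ⟨g, h⟩ x
    refine Quot.inductionOn x ?_
    show ∀ p : G × H, φ (ψ g * p.1 * (1 : G)⁻¹) * (φ 1 * p.2 * h⁻¹)
        = φ (ψ g) * (φ p.1 * p.2) * h⁻¹
    intro p
    simp [mul_assoc]

/-- `Iso(e) ≅ Res(e⁻¹)`. -/
def isoBResIso [Finite G] [Finite H] (e : G ≃* H) :
    Iso (isoB e) (res e.symm.toMonoidHom) where
  toEquiv := e.symm.toEquiv
  equivariant := by
    rintro ⟨h, g⟩ x
    revert x
    show ∀ x : H, e.symm (h * x * (e g)⁻¹) = e.symm h * e.symm x * g⁻¹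
    intro x
    simp [mul_assoc]

/-- `Iso(e⁻¹) ∘ Iso(e) ≅ Id`. -/
def isoBSymmCompIsoB [Finite G] [Finite H] (e : G ≃* H) :
    Iso ((isoB e.symm).comp (isoB e)) (idB G) where
  toEquiv :=
  { toFun := Quot.lift (show G × H → G from fun p => p.1 * e.symm p.2) (by
      rintro ⟨(y : G), (z : H)⟩ ⟨y', z'⟩ ⟨h₀, hq1, hq2⟩
      subst hq1; subst hq2
      simp [isoB, ind, ofHoms, mul_assoc]
      rfl)
    invFun := show G → _ from fun g => Quot.mk _ ((g, 1) : G × H)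
    left_inv := by
      intro q
      refine Quot.inductionOn q ?_
      rintro ⟨(y : G), (z : H)⟩
      exact (Quot.sound ⟨z⁻¹, by simp [isoB, ind, ofHoms, mul_assoc],
        by simp [isoB, ind, ofHoms]⟩).symm
    right_inv := by
      show ∀ g : G, g * e.symm 1 = g
      intro g; simp }
  equivariant := by
    rintro ⟨g, g'⟩ x
    refine Quot.inductionOn x ?_
    show ∀ p : G × H, (g * p.1 * (e.symm (1 : H))⁻¹) * e.symm (1 * p.2 * (e g')⁻¹)
        = g * (p.1 * e.symm p.2) * g'⁻¹
    intro p
    simp [mul_assoc]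

/-- `Iso(τ) ∘ →G ≅ →G`. -/
def isoBCompArrow (G : Type) [Group G] [Finite G] :
    Iso ((isoB (MulEquiv.prodComm : (G × G) ≃* (G × G))).comp (arrow G)) (arrow G) where
  toEquiv :=
  { toFun := Quot.lift (show (G × G) × G → G from fun p => p.1.1 * p.2⁻¹ * p.1.2⁻¹) (by
      rintro ⟨(y : G × G), (x : G)⟩ ⟨y', x'⟩ ⟨h₀, hq1, hq2⟩
      subst hq1; subst hq2
      simp [isoB, ind, ofHoms, arrow, Prod.fst_mul, Prod.snd_mul, mul_assoc])
    invFun := show G → _ from fun x => Quot.mk _ (((x, 1), 1) : (G × G) × G)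
    left_inv := by
      intro q
      refine Quot.inductionOn q ?_
      rintro ⟨⟨y1, y2⟩, x⟩
      revert x
      refine fun (x : G) => ?_
      refine (Quot.sound ⟨(y2, y2 * x), ?_, ?_⟩).symm
      · show ((y1 * x⁻¹ * y2⁻¹, 1) : G × G)
          = (1 : G × G) * (y1, y2)
            * ((MulEquiv.prodComm : (G × G) ≃* (G × G)).toMonoidHom (y2, y2 * x))⁻¹
        simp [Prod.ext_iff, mul_assoc]
      · show (1 : G) = y2 * x * (y2 * x)⁻¹
        group
    right_inv := by
      show ∀ x : G, x * (1 : G)⁻¹ * (1 : G)⁻¹ = x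
      intro x; simp }
  equivariant := by
    rintro ⟨⟨a1, a2⟩, u⟩ q
    refine Quot.inductionOn q ?_
    show ∀ p : (G × G) × G,
        ((a1, a2) * p.1 * ((MulEquiv.prodComm : (G × G) ≃* (G × G)).toMonoidHom 1)⁻¹).1
          * (1 * p.2 * (1 : G)⁻¹)⁻¹
          * (((a1, a2) * p.1 * ((MulEquiv.prodComm : (G × G) ≃* (G × G)).toMonoidHom 1)⁻¹).2)⁻¹
        = a1 * (p.1.1 * p.2⁻¹ * p.1.2⁻¹) * a2⁻¹
    intro p
    simp [Prod.fst_mul, Prod.snd_mul, mul_assoc]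

/-- The swap `(K×H)×(H×G) ≃* (G×H)×(H×K)`. -/
def swap4 (K H G : Type) [Group K] [Group H] [Group G] :
    ((K × H) × (H × G)) ≃* ((G × H) × (H × K)) where
  toFun p := ((p.2.2, p.2.1), (p.1.2, p.1.1))
  invFun p := ((p.2.2, p.2.1), (p.1.2, p.1.1))
  left_inv p := rfl
  right_inv p := rfl
  map_mul' p q := rfl

/-- The middleman biset `M`. -/
def midM (K H G : Type) [Group K] [Group H] [Group G] [Finite K] [Finite H] [Finite G] :
    Biset (G × K) ((K × H) × (H × G)) where
  carrier := K × H × G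
  fin := inferInstance
  smul a y :=
    (a.1.2 * y.1 * a.2.1.1⁻¹, a.2.1.2 * y.2.1 * a.2.2.1⁻¹, a.2.2.2 * y.2.2 * a.1.1⁻¹)
  one_smul' := by rintro ⟨y1, y2, y3⟩; simp
  mul_smul' := by
    rintro ⟨⟨g, k⟩, ⟨k', h⟩, h', g'⟩ ⟨⟨g2, k2⟩, ⟨k2', h2⟩, h2', g2'⟩ ⟨y1, y2, y3⟩
    simp [mul_assoc]

/-- `Iso(τ) ∘ middle K H G ≅ M`. -/
def leftIsoM (K H G : Type) [Group K] [Group H] [Group G] [Finite K] [Finite H] [Finite G] :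
    Iso ((isoB (MulEquiv.prodComm : (K × G) ≃* (G × K))).comp (middle K H G))
      (midM K H G) where
  toEquiv :=
  { toFun := Quot.lift (show (G × K) × (K × H × G) → K × H × G from
      fun p => (p.1.2 * p.2.1, p.2.2.1, p.2.2.2 * p.1.1⁻¹)) (by
      rintro ⟨(y : G × K), (x : K × H × G)⟩ ⟨y', x'⟩ ⟨⟨k₀, g₀⟩, hq1, hq2⟩
      subst hq1; subst hq2
      simp [isoB, ind, ofHoms, middle, Prod.ext_iff, Prod.fst_mul, Prod.snd_mul, mul_assoc]
      rfl)
    invFun := show K × H × G → _ from fun y => Quot.mk _ ((((1, 1) : G × K), y))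
    left_inv := by
      intro q
      refine Quot.inductionOn q ?_
      rintro ⟨⟨a, b⟩, x1, x2, x3⟩
      refine (Quot.sound ⟨(b, a), ?_, ?_⟩).symm
      · show ((1, 1) : G × K)
          = (1 : G × K) * (a, b)
            * ((MulEquiv.prodComm : (K × G) ≃* (G × K)).toMonoidHom (b, a))⁻¹
        simp [Prod.ext_iff]
      · show ((b * x1, x2, x3 * a⁻¹) : K × H × G)
          = (b * x1 * (1 : K)⁻¹, (1 : H) * x2 * (1 : H)⁻¹, (1 : G) * x3 * a⁻¹)
        simp
    right_inv := by
      show ∀ y : K × H × G, ((1 : K) * y.1, y.2.1, y.2.2 * ((1 : G))⁻¹) = y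
      intro y; simp }
  equivariant := by
    rintro ⟨⟨g, k⟩, ⟨k', h⟩, h', g'⟩ q
    refine Quot.inductionOn q (fun (p : (G × K) × (K × H × G)) => ?_)
    show (fun q : (G × K) × (K × H × G) => (q.1.2 * q.2.1, q.2.2.1, q.2.2.2 * q.1.1⁻¹))
        ((g, k) * p.1 * (1 : G × K)⁻¹,
          ((1 : K) * p.2.1 * k'⁻¹, h * p.2.2.1 * h'⁻¹, g' * p.2.2.2 * (1 : G)⁻¹))
      = (k * (p.1.2 * p.2.1) * k'⁻¹, h * p.2.2.1 * h'⁻¹, g' * (p.2.2.2 * p.1.1⁻¹) * g⁻¹)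
    simp [isoB, ind, ofHoms, middle, midM, Prod.ext_iff, Prod.fst_mul, Prod.snd_mul,
      mul_assoc]

/-- `middle G H K ∘ Iso(swap4) ≅ M`. -/
def rightIsoM (K H G : Type) [Group K] [Group H] [Group G] [Finite K] [Finite H] [Finite G] :
    Iso ((middle G H K).comp (isoB (swap4 K H G))) (midM K H G) where
  toEquiv :=
  { toFun := Quot.lift (show (G × H × K) × ((G × H) × (H × K)) → K × H × G from
      fun p => (p.1.2.2⁻¹ * p.2.2.2, p.2.2.1⁻¹ * p.1.2.1⁻¹ * p.2.1.2,
        p.2.1.1⁻¹ * p.1.1⁻¹)) (by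
      rintro ⟨(u : G × H × K), (w : (G × H) × (H × K))⟩ ⟨u', w'⟩ ⟨⟨⟨g₀, h₁⟩, h₂, k₀⟩, hq1, hq2⟩
      subst hq1; subst hq2
      simp [middle, isoB, ind, ofHoms, swap4, Prod.ext_iff, Prod.fst_mul, Prod.snd_mul,
        mul_assoc]
      rfl)
    invFun := show K × H × G → _ from
      fun y => Quot.mk _ (((y.2.2⁻¹, y.2.1⁻¹, y.1⁻¹) : G × H × K), (1 : (G × H) × (H × K)))
    left_inv := by
      intro q
      refine Quot.inductionOn q ?_
      rintro ⟨⟨u1, u2, u3⟩, ⟨a1, a2⟩, a3, a4⟩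
      refine (Quot.sound ⟨((a1⁻¹, a2⁻¹), a3⁻¹, a4⁻¹), ?_, ?_⟩).symm
      · show (((a1⁻¹ * u1⁻¹)⁻¹, (a3⁻¹ * u2⁻¹ * a2)⁻¹, (u3⁻¹ * a4)⁻¹) : G × H × K)
          = ((1 : G) * u1 * (a1⁻¹)⁻¹, a2⁻¹ * u2 * (a3⁻¹)⁻¹, a4⁻¹ * u3 * (1 : K)⁻¹)
        simp [Prod.ext_iff, mul_assoc]
      · show ((1 : (G × H) × (H × K)))
          = ((a1⁻¹, a2⁻¹), a3⁻¹, a4⁻¹) * (((a1, a2), a3, a4) : (G × H) × (H × K))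
            * ((swap4 K H G).toMonoidHom (1 : (K × H) × (H × G)))⁻¹
        simp [swap4, Prod.ext_iff]
    right_inv := by
      show ∀ y : K × H × G,
        (((y.1⁻¹)⁻¹ * (1 : K), (1 : H)⁻¹ * (y.2.1⁻¹)⁻¹ * (1 : H),
          (1 : G)⁻¹ * (y.2.2⁻¹)⁻¹) : K × H × G) = y
      intro y; simp }
  equivariant := by
    rintro ⟨⟨g, k⟩, ⟨k', h⟩, h', g'⟩ q
    refine Quot.inductionOn q (fun (p : (G × H × K) × ((G × H) × (H × K))) => ?_)
    show (fun q : (G × H × K) × ((G × H) × (H × K)) => (q.1.2.2⁻¹ * q.2.2.2,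
          q.2.2.1⁻¹ * q.1.2.1⁻¹ * q.2.1.2, q.2.1.1⁻¹ * q.1.1⁻¹))
        ((g * p.1.1 * (1 : G)⁻¹, (1 : H) * p.1.2.1 * (1 : H)⁻¹, (1 : K) * p.1.2.2 * k⁻¹),
          (1 : (G × H) × (H × K)) * p.2 * (((g', h'), h, k') : (G × H) × (H × K))⁻¹)
      = (k * (p.1.2.2⁻¹ * p.2.2.2) * k'⁻¹, h * (p.2.2.1⁻¹ * p.1.2.1⁻¹ * p.2.1.2) * h'⁻¹,
          g' * (p.2.1.1⁻¹ * p.1.1⁻¹) * g⁻¹)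
    simp [isoB, ind, ofHoms, middle, midM, swap4, Prod.ext_iff, Prod.fst_mul, Prod.snd_mul,
      mul_assoc]

end Aux

end Biset
namespace GreenBF

variable {k : Type} [CommRing k]

lemma map_res_res (A : GreenBF k) {G H K : Type} [Group G] [Fintype G] [Group H] [Fintype H]
    [Group K] [Fintype K] (ψ : K →* G) (φ : G →* H) (a : A.obj H) :
    A.map (Biset.res ψ) (A.map (Biset.res φ) a) = A.map (Biset.res (φ.comp ψ)) a := by
  rw [← A.map_comp, A.map_iso _ _ (Biset.resCompRes ψ φ)]

lemma map_isoB_eq (A : GreenBF k) {G H : Type} [Group G] [Fintype G] [Group H] [Fintype H]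
    (e : G ≃* H) (a : A.obj G) :
    A.map (Biset.isoB e) a = A.map (Biset.res e.symm.toMonoidHom) a :=
  A.map_iso _ _ (Biset.isoBResIso e) a

lemma map_isoB_isoB (A : GreenBF k) {G H : Type} [Group G] [Fintype G] [Group H] [Fintype H]
    (e : G ≃* H) (a : A.obj G) :
    A.map (Biset.isoB e.symm) (A.map (Biset.isoB e) a) = a := by
  rw [← A.map_comp, A.map_iso _ _ (Biset.isoBSymmCompIsoB e), A.map_id]

lemma map_isoB_mul (A : GreenBF k) {G H : Type} [Group G] [Fintype G] [Group H] [Fintype H]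
    (e : G ≃* H) (a b : A.obj G) :
    haveI := A.ring G; haveI := A.ring H
    A.map (Biset.isoB e) (a * b) = A.map (Biset.isoB e) a * A.map (Biset.isoB e) b := by
  letI := A.ring G; letI := A.ring H
  rw [map_isoB_eq, map_isoB_eq, map_isoB_eq, A.res_mul]

lemma map_isoB_map_res (A : GreenBF k) {G H L : Type} [Group G] [Fintype G] [Group H]
    [Fintype H] [Group L] [Fintype L] (e : G ≃* H) (φ : G →* L) (a : A.obj L) :
    A.map (Biset.isoB e) (A.map (Biset.res φ) a)
      = A.map (Biset.res (φ.comp e.symm.toMonoidHom)) a := by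
  rw [map_isoB_eq, map_res_res]

lemma map_res_map_isoB (A : GreenBF k) {G H W : Type} [Group G] [Fintype G] [Group H]
    [Fintype H] [Group W] [Fintype W] (e : G ≃* H) (ρ : W →* H) (a : A.obj G) :
    A.map (Biset.res ρ) (A.map (Biset.isoB e) a)
      = A.map (Biset.res (e.symm.toMonoidHom.comp ρ)) a := by
  rw [map_isoB_eq, map_res_res]

lemma comp_key (A : GreenBF k) {G H K : Type} [Group G] [Fintype G] [Group H] [Fintype H]
    [Group K] [Fintype K] (α' : A.obj (K × H)) (β' : A.obj (H × G)) :
    A.map (Biset.isoB (MulEquiv.prodComm : (K × G) ≃* (G × K)))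
      (A.map (Biset.middle K H G)
        (haveI := A.ring ((K × H) × (H × G))
         A.map (Biset.res (MonoidHom.snd (K × H) (H × G))) β'
           * A.map (Biset.res (MonoidHom.fst (K × H) (H × G))) α'))
    = A.pcomp (A.map (Biset.isoB (MulEquiv.prodComm : (H × G) ≃* (G × H))) β')
        (A.map (Biset.isoB (MulEquiv.prodComm : (K × H) ≃* (H × K))) α') := by
  letI := A.ring ((K × H) × (H × G))
  letI := A.ring ((G × H) × (H × K))
  have e1 : (MonoidHom.snd (K × H) (H × G)).comp (Biset.swap4 K H G).symm.toMonoidHom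
      = ((MulEquiv.prodComm : (H × G) ≃* (G × H)).symm.toMonoidHom).comp
          (MonoidHom.fst (G × H) (H × K)) := rfl
  have e2 : (MonoidHom.fst (K × H) (H × G)).comp (Biset.swap4 K H G).symm.toMonoidHom
      = ((MulEquiv.prodComm : (K × H) ≃* (H × K)).symm.toMonoidHom).comp
          (MonoidHom.snd (G × H) (H × K)) := rfl
  rw [← A.map_comp, A.map_iso _ _ (Biset.leftIsoM K H G),
    ← A.map_iso _ _ (Biset.rightIsoM K H G), A.map_comp,
    A.map_isoB_mul (Biset.swap4 K H G),
    A.map_isoB_map_res, A.map_isoB_map_res, e1, e2]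
  unfold GreenBF.pcomp GreenBF.xprod
  rw [A.map_res_map_isoB, A.map_res_map_isoB]

end GreenBF
lemma prodComm_symm_eq (M N : Type) [Group M] [Group N] :
    (MulEquiv.prodComm : M × N ≃* N × M).symm = (MulEquiv.prodComm : N × M ≃* M × N) :=
  rfl

theorem statement6 (k : Type) [CommRing k] (A : GreenBF k) :
    (∀ (G H : Type) [Group G] [Fintype G] [Group H] [Fintype H],
      Function.Bijective (fun α : A.opp.obj (H × G) => Topp k A α))
    ∧ (∀ (G H : Type) [Group G] [Fintype G] [Group H] [Fintype H]
        (α β : A.opp.obj (H × G)),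
        haveI := A.opp.ring (H × G); haveI := A.ring (G × H)
        Topp k A (α + β) = Topp k A α + Topp k A β)
    ∧ (∀ (G H : Type) [Group G] [Fintype G] [Group H] [Fintype H]
        (c : k) (α : A.opp.obj (H × G)),
        haveI := A.opp.ring (H × G); haveI := A.opp.alg (H × G)
        haveI := A.ring (G × H); haveI := A.alg (G × H)
        Topp k A (c • α) = c • Topp k A α)
    ∧ (∀ (G H K : Type) [Group G] [Fintype G] [Group H] [Fintype H]
        [Group K] [Fintype K] (α : A.opp.obj (K × H)) (β : A.opp.obj (H × G)),
        Topp k A (A.opp.pcomp α β) = A.pcomp (Topp k A β) (Topp k A α))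
    ∧ (∀ (G : Type) [Group G] [Fintype G],
        Topp k A (A.opp.catId G) = A.catId G) := by
  refine ⟨?_, ?_, ?_, ?_, ?_⟩
  · -- bijectivity
    intro G H _ _ _ _
    refine Function.bijective_iff_has_inverse.mpr
      ⟨fun β => MulOpposite.op
        (A.map (Biset.isoB (MulEquiv.prodComm : (G × H) ≃* (H × G))) β), ?_, ?_⟩
    · intro α
      show MulOpposite.op
          (A.map (Biset.isoB (MulEquiv.prodComm : (G × H) ≃* (H × G)))
            (A.map (Biset.isoB (MulEquiv.prodComm : (H × G) ≃* (G × H)))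
              (MulOpposite.unop α))) = α
      have := A.map_isoB_isoB (e := (MulEquiv.prodComm : (H × G) ≃* (G × H)))
        (MulOpposite.unop α)
      rw [prodComm_symm_eq] at this
      rw [this]
      rfl
    · intro β
      show A.map (Biset.isoB (MulEquiv.prodComm : (H × G) ≃* (G × H)))
          (MulOpposite.unop (MulOpposite.op
            (A.map (Biset.isoB (MulEquiv.prodComm : (G × H) ≃* (H × G))) β))) = β
      rw [MulOpposite.unop_op]
      have := A.map_isoB_isoB (e := (MulEquiv.prodComm : (G × H) ≃* (H × G))) β
      rwa [prodComm_symm_eq] at this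
  · -- additivity
    intro G H _ _ _ _ α β
    letI := A.ring (H × G); letI := A.opp.ring (H × G); letI := A.ring (G × H)
    show A.map _ (MulOpposite.unop (α + β)) = _
    exact A.map_add _ (MulOpposite.unop α) (MulOpposite.unop β)
  · -- k-linearity
    intro G H _ _ _ _ c α
    letI := A.ring (H × G); letI := A.opp.ring (H × G); letI := A.ring (G × H)
    letI := A.alg (H × G); letI := A.opp.alg (H × G); letI := A.alg (G × H)
    show A.map _ (MulOpposite.unop (c • α)) = _
    exact A.map_smul _ c (MulOpposite.unop α)
  · -- composition
    intro G H K _ _ _ _ _ _ α β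
    show A.map (Biset.isoB (MulEquiv.prodComm : (K × G) ≃* (G × K)))
        (MulOpposite.unop (A.opp.pcomp α β)) = _
    have hu : MulOpposite.unop (A.opp.pcomp α β)
        = A.map (Biset.middle K H G)
            (haveI := A.ring ((K × H) × (H × G))
             A.map (Biset.res (MonoidHom.snd (K × H) (H × G))) (MulOpposite.unop β)
               * A.map (Biset.res (MonoidHom.fst (K × H) (H × G)))
                   (MulOpposite.unop α)) := rfl
    rw [hu]
    exact A.comp_key (MulOpposite.unop α) (MulOpposite.unop β)
  · -- identities
    intro G _ _
    show A.map (Biset.isoB (MulEquiv.prodComm : (G × G) ≃* (G × G)))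
        (MulOpposite.unop (A.opp.catId G)) = A.catId G
    have h1 : MulOpposite.unop (A.opp.catId G) = A.map (Biset.arrow G) A.one1 := rfl
    rw [h1, ← A.map_comp, A.map_iso _ _ (Biset.isoBCompArrow G)]
    rfl
end
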